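/- arXiv:1806.01359 — 5 statements merged into one kernel-verified Lean document; each statement's English description precedes it below -/
import Mathlib

section
/- Let P(z, z̄) = ∑_{k=-m}^{m} C_k z^{m+k} z̄^{m-k} be a real-valued homogeneous polynomial of degree 2m on ℂ with P ≥ 0 everywhere. Then for every k, |Re C_k| ≤ C_0. Moreover, after replacing z by λz for a suitable unimodular λ (a rotation), for each fixed k one obtains |C_k| ≤ C_0. -/
open Complex Finset ComplexConjugate

/-!
On the unit circle `z̄ = z⁻¹`, so `P(z) = f(z²)` for the Laurent polynomial
`f(w) = ∑_{|k| ≤ m} C_k w^k`, which is therefore nonnegative on the circle. For `|u| = 1` the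
weight `|1 + u w^k|² = 2 + u w^k + ū w^{-k}` is nonnegative, and averaging `|1 + u w^k|² f(w)`
over the `(2m+1)`-st roots of unity (exact for frequencies in `[-2m, 2m]`, like the integral over
the circle) gives `0 ≤ 2 C_0 + u C_{-k} + ū C_k = 2 (C_0 + Re (ū C_k))`. The phase
`u = -e^{i arg C_k}` plays the role of the rotation and gives `|Re C_k| ≤ |C_k| ≤ C_0`.
-/

section LaurentSum

variable {K : Type*} [Field K]

noncomputable def laurentSum (n : ℕ) (c : ℤ → K) (w : K) : K :=
  ∑ j ∈ Icc (-(n : ℤ)) n, c j * w ^ j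

theorem IsPrimitiveRoot.sum_range_zpow_pow {ω : K} {N : ℕ} (hω : IsPrimitiveRoot ω N) (a : ℤ) :
    ∑ t ∈ range N, (ω ^ a) ^ t = if (N : ℤ) ∣ a then (N : K) else 0 := by
  split_ifs with h
  · simp [(hω.zpow_eq_one_iff_dvd a).mpr h]
  · have hne : ω ^ a ≠ 1 := mt (hω.zpow_eq_one_iff_dvd a).mp h
    have hpow : (ω ^ a) ^ N = 1 := by
      rw [← zpow_natCast, ← zpow_mul, mul_comm, zpow_mul, zpow_natCast, hω.pow_eq_one, one_zpow]
    rw [geom_sum_eq hne, hpow, sub_self, zero_div]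

theorem IsPrimitiveRoot.sum_range_zpow_mul_laurentSum {ω : K} {N n : ℕ}
    (hω : IsPrimitiveRoot ω N) (hN : 2 * n < N) (c : ℤ → K) {l : ℤ}
    (hl : l ∈ Icc (-(n : ℤ)) n) :
    ∑ t ∈ range N, (ω ^ t) ^ l * laurentSum n c (ω ^ t) = N * c (-l) := by
  have hω0 : ω ≠ 0 := hω.ne_zero (by omega)
  have hterm : ∀ (t : ℕ) (j : ℤ),
      (ω ^ t) ^ l * (c j * (ω ^ t) ^ j) = c j * (ω ^ (j + l)) ^ t := by
    intro t j
    rw [mul_left_comm, ← zpow_add₀ (pow_ne_zero t hω0), ← zpow_natCast, ← zpow_mul,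
      ← zpow_natCast (ω ^ (j + l)), ← zpow_mul, add_comm l, mul_comm (t : ℤ)]
  simp_rw [laurentSum, mul_sum, hterm]
  rw [sum_comm]
  simp_rw [← mul_sum, hω.sum_range_zpow_pow]
  rw [mem_Icc] at hl
  rw [sum_eq_single_of_mem (-l) (by rw [mem_Icc]; omega)]
  · simp [mul_comm]
  · intro j hj hjl
    rw [mem_Icc] at hj
    have hnd : ¬ (N : ℤ) ∣ j + l := fun hd =>
      hjl (by have := Int.eq_zero_of_abs_lt_dvd hd (by rw [abs_lt]; omega); omega)
    simp [hnd]

end LaurentSum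

theorem normSq_one_add_of_norm_eq_one {v : ℂ} (hv : ‖v‖ = 1) :
    (normSq (1 + v) : ℂ) = 2 + v + conj v := by
  rw [← mul_conj, map_add, map_one]
  have : v * conj v = 1 := by rw [mul_conj, normSq_eq_norm_sq, hv]; norm_num
  linear_combination this

theorem re_coeff_zero_add_re_conj_mul_nonneg {n : ℕ} {c : ℤ → ℂ}
    (hc : ∀ j, c (-j) = conj (c j)) (hf : ∀ w : ℂ, ‖w‖ = 1 → 0 ≤ (laurentSum n c w).re)
    {k : ℤ} (hk : k ∈ Icc (-(n : ℤ)) n) {u : ℂ} (hu : ‖u‖ = 1) :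
    0 ≤ (c 0).re + (conj u * c k).re := by
  set N := 2 * n + 1
  have hω := isPrimitiveRoot_exp N (by omega)
  set ω := exp (2 * Real.pi * I / N)
  have hωt : ∀ t : ℕ, ‖ω ^ t‖ = 1 := fun t => by
    rw [norm_pow, hω.norm'_eq_one (by omega), one_pow]
  -- `2` is written as `2 * w ^ 0`, so that each of the three terms is a coefficient extraction.
  have hweight : ∀ t : ℕ, (normSq (1 + u * (ω ^ t) ^ k) : ℂ)
      = 2 * (ω ^ t) ^ (0 : ℤ) + u * (ω ^ t) ^ k + conj u * (ω ^ t) ^ (-k) := fun t => by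
    rw [normSq_one_add_of_norm_eq_one (by rw [norm_mul, norm_zpow, hu, hωt, one_zpow, one_mul]),
      map_mul, map_zpow₀, ← inv_eq_conj (hωt t), inv_zpow', zpow_zero, mul_one]
  have hsum : ∑ t ∈ range N, (normSq (1 + u * (ω ^ t) ^ k) : ℂ) * laurentSum n c (ω ^ t)
      = N * (2 * c 0 + u * c (-k) + conj u * c k) := by
    have hN : 2 * n < N := by omega
    have hneg : -k ∈ Icc (-(n : ℤ)) n := by rw [mem_Icc] at hk ⊢; omega
    have hzero : (0 : ℤ) ∈ Icc (-(n : ℤ)) n := by simp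
    simp_rw [hweight, add_mul, sum_add_distrib, mul_assoc, ← mul_sum,
      hω.sum_range_zpow_mul_laurentSum hN c hk, hω.sum_range_zpow_mul_laurentSum hN c hneg,
      hω.sum_range_zpow_mul_laurentSum hN c hzero]
    simp only [neg_zero, neg_neg]
    ring
  have hre :
      0 ≤ (∑ t ∈ range N, (normSq (1 + u * (ω ^ t) ^ k) : ℂ) * laurentSum n c (ω ^ t)).re := by
    rw [re_sum]
    exact sum_nonneg fun t _ => by
      rw [re_ofReal_mul]
      exact mul_nonneg (normSq_nonneg _) (hf _ (hωt t))
  have hconj : u * conj (c k) = conj (conj u * c k) := by simp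
  rw [hsum, hc k, hconj, add_assoc, add_comm (conj _), add_conj, ← ofReal_natCast,
    re_ofReal_mul, add_re, ofReal_re, mul_re, re_ofNat, im_ofNat, zero_mul, sub_zero] at hre
  have hN : (0 : ℝ) < N := by positivity
  nlinarith

theorem norm_coeff_le_re_coeff_zero {n : ℕ} {c : ℤ → ℂ}
    (hc : ∀ j, c (-j) = conj (c j)) (hf : ∀ w : ℂ, ‖w‖ = 1 → 0 ≤ (laurentSum n c w).re)
    {k : ℤ} (hk : k ∈ Icc (-(n : ℤ)) n) : ‖c k‖ ≤ (c 0).re := by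
  have h := re_coeff_zero_add_re_conj_mul_nonneg hc hf hk (u := -exp (arg (c k) * I))
    (by rw [norm_neg, norm_exp_ofReal_mul_I])
  have hphase : conj (-exp (arg (c k) * I)) * c k = -‖c k‖ := by
    nth_rw 2 [← norm_mul_exp_arg_mul_I (c k)]
    rw [map_neg, ← exp_conj, map_mul, conj_ofReal, conj_I, neg_mul, mul_left_comm, ← exp_add]
    simp
  rw [hphase, neg_re, ofReal_re] at h
  linarith

theorem sum_mul_pow_mul_conj_pow_eq_laurentSum {z : ℂ} (hz : ‖z‖ = 1) (m : ℕ) (C : ℤ → ℂ) :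
    ∑ k ∈ Icc (-(m : ℤ)) m, C k * z ^ ((m : ℤ) + k).toNat * conj z ^ ((m : ℤ) - k).toNat
      = laurentSum m C (z ^ 2) := by
  refine sum_congr rfl fun k hk => ?_
  rw [mem_Icc] at hk
  have hz0 : z ≠ 0 := norm_ne_zero_iff.mp (by rw [hz]; exact one_ne_zero)
  rw [← inv_eq_conj hz, mul_assoc, ← zpow_natCast, ← zpow_natCast z⁻¹,
    Int.toNat_of_nonneg (by omega), Int.toNat_of_nonneg (by omega), inv_zpow', ← zpow_add₀ hz0,
    ← zpow_natCast z 2, ← zpow_mul]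
  congr 2
  push_cast
  ring

/-- For a real-valued nonnegative homogeneous polynomial
`P(z, z̄) = ∑_{k=-m}^{m} C_k z^{m+k} z̄^{m-k}` of degree `2m`, one has
`|Re C_k| ≤ C_0` for every `k`; moreover (after a rotation, which does not change
the modulus of the coefficients) `|C_k| ≤ C_0` for each `k`. -/
theorem stmt_2 (m : ℕ) (C : ℤ → ℂ)
    (hreal : ∀ k : ℤ, C (-k) = starRingEnd ℂ (C k))
    (hnonneg : ∀ z : ℂ, 0 ≤ (∑ k ∈ Finset.Icc (-(m : ℤ)) (m : ℤ),
      C k * z ^ ((m : ℤ) + k).toNat * (starRingEnd ℂ z) ^ ((m : ℤ) - k).toNat).re) :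
    ∀ k ∈ Finset.Icc (-(m : ℤ)) (m : ℤ),
      |(C k).re| ≤ (C 0).re ∧ ‖C k‖ ≤ (C 0).re := by
  intro k hk
  have hf : ∀ w : ℂ, ‖w‖ = 1 → 0 ≤ (laurentSum m C w).re := by
    intro w hw
    obtain ⟨z, rfl⟩ := IsAlgClosed.exists_pow_nat_eq w two_pos
    have hz : ‖z‖ = 1 := by
      rwa [norm_pow, pow_eq_one_iff_of_nonneg (norm_nonneg z) two_ne_zero] at hw
    rw [← sum_mul_pow_mul_conj_pow_eq_laurentSum hz]
    exact hnonneg z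
  have hnorm := norm_coeff_le_re_coeff_zero hreal hf hk
  exact ⟨(abs_re_le_norm _).trans hnorm, hnorm⟩
end

section
/- Let μ = (1, μ_2, ..., μ_n) with 1 > μ_2 ≥ ... ≥ μ_n > 0 be a weight, and let r = -2 Re z_1 + p(z_{[2,n]}, z̄_{[2,n]}) + E, where p is a weighted homogeneous polynomial of weight 1 (each monomial z^α z̄^β of p satisfies ∑ (α_j + β_j) μ_j = 1) and E = o_μ(1) is a smooth function all of whose Taylor monomials have weight > 1. If the domain {r < 0} is pseudoconvex near 0, then the model domain {r_0 < 0}, with r_0 = -2 Re z_1 + p, is pseudoconvex. -/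
open Complex Finset

/-- The Wirtinger derivative `∂_{z_j} g` of a function on `ℂ^n`. -/
noncomputable def wder {n : ℕ} (j : Fin n) (g : (Fin n → ℂ) → ℂ) (w : Fin n → ℂ) : ℂ :=
  (fderiv ℝ g w (Pi.single j 1) - Complex.I * fderiv ℝ g w (Pi.single j Complex.I)) / 2

/-- The anti-Wirtinger derivative `∂_{z̄_j} g` of a function on `ℂ^n`. -/
noncomputable def wderBar {n : ℕ} (j : Fin n) (g : (Fin n → ℂ) → ℂ) (w : Fin n → ℂ) : ℂ :=
  (fderiv ℝ g w (Pi.single j 1) + Complex.I * fderiv ℝ g w (Pi.single j Complex.I)) / 2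

/-- The complex Hessian entry `g_{z_j z̄_k}`. -/
noncomputable def chess {n : ℕ} (g : (Fin n → ℂ) → ℂ) (j k : Fin n) (w : Fin n → ℂ) : ℂ :=
  wder j (wderBar k g) w

/-- Iterated Wirtinger derivatives along a list of (coordinate, conjugate?) pairs. -/
noncomputable def wIter {n : ℕ} : List (Fin n × Bool) → ((Fin n → ℂ) → ℂ) → ((Fin n → ℂ) → ℂ)
  | [], g => g
  | jb :: L, g => wIter L (if jb.2 then wderBar jb.1 g else wder jb.1 g)

namespace Stmt6

noncomputable def rpd {m : ℕ} (j : Fin m) (b : Bool) (g : (Fin m → ℂ) → ℂ) (x : Fin m → ℂ) : ℂ :=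
  fderiv ℝ g x (Pi.single j (if b then Complex.I else 1))

noncomputable def rpdIter {m : ℕ} : List (Fin m × Bool) → ((Fin m → ℂ) → ℂ) → ((Fin m → ℂ) → ℂ)
  | [], g => g
  | jb :: L, g => rpdIter L (rpd jb.1 jb.2 g)

variable {m : ℕ}

lemma smooth_diffAt {g : (Fin m → ℂ) → ℂ} (hg : ContDiff ℝ (⊤ : ℕ∞) g) (x : Fin m → ℂ) :
    DifferentiableAt ℝ g x := (hg.differentiable (by simp)).differentiableAt

lemma contDiff_fderiv_apply {g : (Fin m → ℂ) → ℂ} (hg : ContDiff ℝ (⊤ : ℕ∞) g)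
    (v : Fin m → ℂ) : ContDiff ℝ (⊤ : ℕ∞) (fun x => fderiv ℝ g x v) :=
  (hg.fderiv_right (by exact_mod_cast le_top)).clm_apply contDiff_const

lemma rpd_contDiff {g : (Fin m → ℂ) → ℂ} (hg : ContDiff ℝ (⊤ : ℕ∞) g) (j : Fin m) (b : Bool) :
    ContDiff ℝ (⊤ : ℕ∞) (rpd j b g) := contDiff_fderiv_apply hg _

lemma wder_eq_rpd (j : Fin m) (g : (Fin m → ℂ) → ℂ) :
    wder j g = fun x => (rpd j false g x - Complex.I * rpd j true g x) / 2 := rfl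

lemma wderBar_eq_rpd (j : Fin m) (g : (Fin m → ℂ) → ℂ) :
    wderBar j g = fun x => (rpd j false g x + Complex.I * rpd j true g x) / 2 := rfl

lemma wder_contDiff {g : (Fin m → ℂ) → ℂ} (hg : ContDiff ℝ (⊤ : ℕ∞) g) (j : Fin m) :
    ContDiff ℝ (⊤ : ℕ∞) (wder j g) := by
  rw [wder_eq_rpd]
  exact (((rpd_contDiff hg j false).sub ((contDiff_const (c := Complex.I)).mul
    (rpd_contDiff hg j true))).div_const 2)

lemma wderBar_contDiff {g : (Fin m → ℂ) → ℂ} (hg : ContDiff ℝ (⊤ : ℕ∞) g) (j : Fin m) :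
    ContDiff ℝ (⊤ : ℕ∞) (wderBar j g) := by
  rw [wderBar_eq_rpd]
  exact (((rpd_contDiff hg j false).add ((contDiff_const (c := Complex.I)).mul
    (rpd_contDiff hg j true))).div_const 2)

lemma chess_contDiff {g : (Fin m → ℂ) → ℂ} (hg : ContDiff ℝ (⊤ : ℕ∞) g) (j k : Fin m) :
    ContDiff ℝ (⊤ : ℕ∞) (chess g j k) := wder_contDiff (wderBar_contDiff hg k) j

lemma rpd_add {f g : (Fin m → ℂ) → ℂ} (hf : ContDiff ℝ (⊤ : ℕ∞) f)
    (hg : ContDiff ℝ (⊤ : ℕ∞) g) (j : Fin m) (b : Bool) :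
    rpd j b (fun x => f x + g x) = fun x => rpd j b f x + rpd j b g x := by
  funext x
  simp only [rpd, fderiv_fun_add (smooth_diffAt hf x) (smooth_diffAt hg x),
    ContinuousLinearMap.add_apply]

lemma rpd_const_mul {f : (Fin m → ℂ) → ℂ} (hf : ContDiff ℝ (⊤ : ℕ∞) f) (c : ℂ)
    (j : Fin m) (b : Bool) :
    rpd j b (fun x => c * f x) = fun x => c * rpd j b f x := by
  funext x
  have : (fun x => c * f x) = fun x => c • f x := by funext y; simp [smul_eq_mul]
  simp only [rpd]
  rw [this, fderiv_fun_const_smul (smooth_diffAt hf x) c]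
  simp

lemma wder_add {f g : (Fin m → ℂ) → ℂ} (hf : ContDiff ℝ (⊤ : ℕ∞) f)
    (hg : ContDiff ℝ (⊤ : ℕ∞) g) (j : Fin m) (x : Fin m → ℂ) :
    wder j (fun y => f y + g y) x = wder j f x + wder j g x := by
  simp only [wder_eq_rpd, rpd_add hf hg]
  ring

lemma wderBar_add {f g : (Fin m → ℂ) → ℂ} (hf : ContDiff ℝ (⊤ : ℕ∞) f)
    (hg : ContDiff ℝ (⊤ : ℕ∞) g) (j : Fin m) (x : Fin m → ℂ) :
    wderBar j (fun y => f y + g y) x = wderBar j f x + wderBar j g x := by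
  simp only [wderBar_eq_rpd, rpd_add hf hg]
  ring

lemma wder_smul_real {f : (Fin m → ℂ) → ℂ} (hf : ContDiff ℝ (⊤ : ℕ∞) f) (c : ℝ)
    (j : Fin m) (x : Fin m → ℂ) :
    wder j (fun y => c • f y) x = c • wder j f x := by
  simp only [wder]
  rw [fderiv_fun_const_smul (smooth_diffAt hf x) c]
  simp only [ContinuousLinearMap.smul_apply]
  push_cast [Complex.real_smul]
  ring

lemma wderBar_smul_real {f : (Fin m → ℂ) → ℂ} (hf : ContDiff ℝ (⊤ : ℕ∞) f) (c : ℝ)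
    (j : Fin m) (x : Fin m → ℂ) :
    wderBar j (fun y => c • f y) x = c • wderBar j f x := by
  simp only [wderBar]
  rw [fderiv_fun_const_smul (smooth_diffAt hf x) c]
  simp only [ContinuousLinearMap.smul_apply]
  push_cast [Complex.real_smul]
  ring

lemma wder_const (c : ℂ) (j : Fin m) (x : Fin m → ℂ) :
    wder j (fun _ => c) x = 0 := by
  simp [wder, fderiv_const]

lemma chess_add {f g : (Fin m → ℂ) → ℂ} (hf : ContDiff ℝ (⊤ : ℕ∞) f)
    (hg : ContDiff ℝ (⊤ : ℕ∞) g) (j k : Fin m) (x : Fin m → ℂ) :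
    chess (fun y => f y + g y) j k x = chess f j k x + chess g j k x := by
  have h1 : wderBar k (fun y => f y + g y) = fun y => wderBar k f y + wderBar k g y := by
    funext y; exact wderBar_add hf hg k y
  simp only [chess, h1]
  exact wder_add (wderBar_contDiff hf k) (wderBar_contDiff hg k) j x


lemma rpdIter_add {f g : (Fin m → ℂ) → ℂ} (L : List (Fin m × Bool))
    (hf : ContDiff ℝ (⊤ : ℕ∞) f) (hg : ContDiff ℝ (⊤ : ℕ∞) g) :
    rpdIter L (fun x => f x + g x) = fun x => rpdIter L f x + rpdIter L g x := by
  induction L generalizing f g with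
  | nil => rfl
  | cons jb L ih =>
    simp only [rpdIter]
    rw [rpd_add hf hg]
    exact ih (rpd_contDiff hf jb.1 jb.2) (rpd_contDiff hg jb.1 jb.2)

lemma rpdIter_const_mul {f : (Fin m → ℂ) → ℂ} (L : List (Fin m × Bool))
    (hf : ContDiff ℝ (⊤ : ℕ∞) f) (c : ℂ) :
    rpdIter L (fun x => c * f x) = fun x => c * rpdIter L f x := by
  induction L generalizing f with
  | nil => rfl
  | cons jb L ih =>
    simp only [rpdIter]
    rw [rpd_const_mul hf c]
    exact ih (rpd_contDiff hf jb.1 jb.2)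

/-- Conversion: vanishing of all low-weight iterated Wirtinger derivatives at 0 implies
vanishing of all low-weight iterated real partial derivatives at 0. -/
lemma rpdIter_zero_of_wIter (μ : Fin m → ℝ) :
    ∀ (L : List (Fin m × Bool)) (F : (Fin m → ℂ) → ℂ), ContDiff ℝ (⊤ : ℕ∞) F →
    (∀ L' : List (Fin m × Bool),
      (L'.map (fun jb => μ jb.1)).sum ≤ (L.map (fun jb => μ jb.1)).sum → wIter L' F 0 = 0) →
    rpdIter L F 0 = 0 := by
  intro L
  induction L with
  | nil =>
    intro F _ h
    exact h [] le_rfl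
  | cons jb L ih =>
    intro F hF h
    obtain ⟨j, b⟩ := jb
    have hwsum : ∀ L' : List (Fin m × Bool),
        (L'.map (fun jb => μ jb.1)).sum ≤ (L.map (fun jb => μ jb.1)).sum →
        wIter L' (wder j F) 0 = 0 ∧ wIter L' (wderBar j F) 0 = 0 := by
      intro L' hL'
      constructor
      · have := h ((j, false) :: L') (by simp only [List.map_cons, List.sum_cons]; linarith)
        simpa [wIter] using this
      · have := h ((j, true) :: L') (by simp only [List.map_cons, List.sum_cons]; linarith)
        simpa [wIter] using this
    have hwd : ContDiff ℝ (⊤ : ℕ∞) (wder j F) := wder_contDiff hF j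
    have hwb : ContDiff ℝ (⊤ : ℕ∞) (wderBar j F) := wderBar_contDiff hF j
    have h1 : rpdIter L (wder j F) 0 = 0 := ih _ hwd (fun L' hL' => (hwsum L' hL').1)
    have h2 : rpdIter L (wderBar j F) 0 = 0 := ih _ hwb (fun L' hL' => (hwsum L' hL').2)
    simp only [rpdIter]
    cases b with
    | false =>
      have : rpd j false F = fun x => wder j F x + wderBar j F x := by
        funext x
        simp only [rpd, wder, wderBar]
        norm_num
        ring
      rw [this, rpdIter_add L hwd hwb]
      simp [h1, h2]
    | true =>
      have : rpd j true F = fun x => Complex.I * wder j F x + (-Complex.I) * wderBar j F x := by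
        funext x
        simp only [rpd, wder, wderBar]
        norm_num
        linear_combination ((fderiv ℝ F x) (Pi.single j Complex.I) : ℂ) * Complex.I_sq
      rw [this]
      have hwd' : ContDiff ℝ (⊤ : ℕ∞) (fun x => Complex.I * wder j F x) :=
        contDiff_const.mul hwd
      have hwb' : ContDiff ℝ (⊤ : ℕ∞) (fun x => (-Complex.I) * wderBar j F x) :=
        contDiff_const.mul hwb
      rw [rpdIter_add L hwd' hwb', rpdIter_const_mul L hwd, rpdIter_const_mul L hwb]
      simp [h1, h2]


section CLMcomp

variable {m : ℕ}

lemma fderiv_comp_clm (g : (Fin m → ℂ) → ℂ) (A : (Fin m → ℂ) →L[ℝ] (Fin m → ℂ))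
    (x v : Fin m → ℂ) (hg : DifferentiableAt ℝ g (A x)) :
    fderiv ℝ (fun z => g (A z)) x v = fderiv ℝ g (A x) (A v) := by
  have h : fderiv ℝ (fun z => g (A z)) x = (fderiv ℝ g (A x)).comp A := by
    have := fderiv_comp x hg A.differentiableAt
    rw [A.fderiv] at this
    exact this
  rw [h]
  rfl

lemma wder_comp_scale {g : (Fin m → ℂ) → ℂ} (hg : ContDiff ℝ (⊤ : ℕ∞) g)
    (A : (Fin m → ℂ) →L[ℝ] (Fin m → ℂ)) (j : Fin m) (c : ℝ)
    (h1 : A (Pi.single j 1) = c • (Pi.single j 1 : Fin m → ℂ))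
    (hI : A (Pi.single j Complex.I) = c • (Pi.single j Complex.I : Fin m → ℂ)) (x : Fin m → ℂ) :
    wder j (fun z => g (A z)) x = c • wder j g (A x) := by
  simp only [wder]
  rw [fderiv_comp_clm g A x _ (smooth_diffAt hg _), fderiv_comp_clm g A x _ (smooth_diffAt hg _),
    h1, hI, ContinuousLinearMap.map_smul, ContinuousLinearMap.map_smul]
  push_cast [Complex.real_smul]
  ring

lemma wderBar_comp_scale {g : (Fin m → ℂ) → ℂ} (hg : ContDiff ℝ (⊤ : ℕ∞) g)
    (A : (Fin m → ℂ) →L[ℝ] (Fin m → ℂ)) (j : Fin m) (c : ℝ)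
    (h1 : A (Pi.single j 1) = c • (Pi.single j 1 : Fin m → ℂ))
    (hI : A (Pi.single j Complex.I) = c • (Pi.single j Complex.I : Fin m → ℂ)) (x : Fin m → ℂ) :
    wderBar j (fun z => g (A z)) x = c • wderBar j g (A x) := by
  simp only [wderBar]
  rw [fderiv_comp_clm g A x _ (smooth_diffAt hg _), fderiv_comp_clm g A x _ (smooth_diffAt hg _),
    h1, hI, ContinuousLinearMap.map_smul, ContinuousLinearMap.map_smul]
  push_cast [Complex.real_smul]
  ring

lemma wder_comp_zero {g : (Fin m → ℂ) → ℂ} (hg : ContDiff ℝ (⊤ : ℕ∞) g)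
    (A : (Fin m → ℂ) →L[ℝ] (Fin m → ℂ)) (j : Fin m)
    (h1 : A (Pi.single j 1) = 0) (hI : A (Pi.single j Complex.I) = 0) (x : Fin m → ℂ) :
    wder j (fun z => g (A z)) x = 0 := by
  simp only [wder]
  rw [fderiv_comp_clm g A x _ (smooth_diffAt hg _), fderiv_comp_clm g A x _ (smooth_diffAt hg _),
    h1, hI]
  simp

lemma wderBar_comp_zero {g : (Fin m → ℂ) → ℂ} (hg : ContDiff ℝ (⊤ : ℕ∞) g)
    (A : (Fin m → ℂ) →L[ℝ] (Fin m → ℂ)) (j : Fin m)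
    (h1 : A (Pi.single j 1) = 0) (hI : A (Pi.single j Complex.I) = 0) (x : Fin m → ℂ) :
    wderBar j (fun z => g (A z)) x = 0 := by
  simp only [wderBar]
  rw [fderiv_comp_clm g A x _ (smooth_diffAt hg _), fderiv_comp_clm g A x _ (smooth_diffAt hg _),
    h1, hI]
  simp

end CLMcomp

section Dmap

variable {m : ℕ}

/-- The anisotropic dilation as a continuous `ℝ`-linear map. -/
noncomputable def Dmap (μ : Fin m → ℝ) (t : ℝ) : (Fin m → ℂ) →L[ℝ] (Fin m → ℂ) :=
  ContinuousLinearMap.pi (fun j => (t ^ μ j : ℝ) • (ContinuousLinearMap.proj j))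

lemma Dmap_apply (μ : Fin m → ℝ) (t : ℝ) (z : Fin m → ℂ) (i : Fin m) :
    Dmap μ t z i = (t ^ μ i : ℝ) • z i := rfl

lemma Dmap_single (μ : Fin m → ℝ) (t : ℝ) (j : Fin m) (v : ℂ) :
    Dmap μ t (Pi.single j v) = (t ^ μ j : ℝ) • (Pi.single j v : Fin m → ℂ) := by
  funext i
  rcases eq_or_ne i j with rfl | hij
  · simp [Dmap_apply]
  · simp [Dmap_apply, Pi.single_apply, hij]

lemma Dmap_norm_le (μ : Fin m → ℝ) {ν t : ℝ} (hνle : ∀ j, ν ≤ μ j)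
    (ht : 0 < t) (ht1 : t ≤ 1) (y : Fin m → ℂ) :
    ‖Dmap μ t y‖ ≤ t ^ ν * ‖y‖ := by
  have h0 : (0:ℝ) ≤ t ^ ν * ‖y‖ :=
    mul_nonneg (Real.rpow_nonneg ht.le _) (norm_nonneg _)
  rw [pi_norm_le_iff_of_nonneg h0]
  intro i
  rw [Dmap_apply, norm_smul]
  have h1 : ‖(t ^ μ i : ℝ)‖ ≤ t ^ ν := by
    rw [Real.norm_eq_abs, _root_.abs_of_nonneg (Real.rpow_nonneg ht.le _)]
    exact Real.rpow_le_rpow_of_exponent_ge ht ht1 (hνle i)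
  exact mul_le_mul h1 (norm_le_pi_norm y i) (norm_nonneg _) (Real.rpow_nonneg ht.le _)

lemma Dmap_smul (μ : Fin m → ℝ) (t s : ℝ) (y : Fin m → ℂ) :
    s • Dmap μ t y = Dmap μ t (s • y) := (ContinuousLinearMap.map_smul _ _ _).symm

end Dmap

section Aniso

variable {m : ℕ}

/-- Key anisotropic decay lemma: if all iterated real partial derivatives of `F` at `0`
of total weight `≤ W` vanish, then `F (Dmap μ t y) = o(t^W)` uniformly on balls. -/
lemma aniso (μ : Fin m → ℝ) (ν : ℝ) (hν : 0 < ν) (hνle : ∀ j, ν ≤ μ j)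
    (F : (Fin m → ℂ) → ℂ) (hF : ContDiff ℝ (⊤ : ℕ∞) F) (W : ℝ)
    (hvan : ∀ L : List (Fin m × Bool), (L.map (fun jb => μ jb.1)).sum ≤ W → rpdIter L F 0 = 0)
    (R ε : ℝ) (hR : 0 < R) (hε : 0 < ε) :
    ∀ᶠ t in nhdsWithin (0:ℝ) (Set.Ioi 0), ∀ y : Fin m → ℂ, ‖y‖ ≤ R →
      ‖F (Dmap μ t y)‖ ≤ ε * t ^ W := by
  have key : ∀ k : ℕ, ∀ F : (Fin m → ℂ) → ℂ, ContDiff ℝ (⊤ : ℕ∞) F → ∀ W : ℝ,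
      (∀ L : List (Fin m × Bool), (L.map (fun jb => μ jb.1)).sum ≤ W → rpdIter L F 0 = 0) →
      W < k * ν → ∀ ε : ℝ, 0 < ε →
      ∀ᶠ t in nhdsWithin (0:ℝ) (Set.Ioi 0), ∀ y : Fin m → ℂ, ‖y‖ ≤ R →
        ‖F (Dmap μ t y)‖ ≤ ε * t ^ W := by
    intro k
    induction k with
    | zero =>
      intro F hF W _ hW ε hε
      simp only [Nat.cast_zero, zero_mul] at hW
      -- F is bounded near 0; t^W blows up.
      obtain ⟨C, hC⟩ := (isCompact_closedBall (0 : Fin m → ℂ) 1).exists_bound_of_continuousOn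
        (hF.continuous.continuousOn)
      have hC1 : ∀ x ∈ Metric.closedBall (0 : Fin m → ℂ) 1, ‖F x‖ ≤ max C 1 :=
        fun x hx => le_trans (hC x hx) (le_max_left _ _)
      have hmax : (0:ℝ) < max C 1 := lt_of_lt_of_le zero_lt_one (le_max_right _ _)
      have htsmall : ∀ᶠ t in nhdsWithin (0:ℝ) (Set.Ioi 0), t ^ ν * R ≤ 1 := by
        have h0 : Filter.Tendsto (fun t : ℝ => t ^ ν * R) (nhdsWithin 0 (Set.Ioi 0)) (nhds 0) := by
          have h1 : Filter.Tendsto (fun t : ℝ => t ^ ν) (nhds (0:ℝ)) (nhds 0) := by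
            have := (Real.continuousAt_rpow_const 0 ν (Or.inr hν.le)).tendsto
            rwa [Real.zero_rpow hν.ne'] at this
          have h2 : Filter.Tendsto (fun t : ℝ => t ^ ν)
              (nhdsWithin (0:ℝ) (Set.Ioi 0)) (nhds 0) := h1.mono_left nhdsWithin_le_nhds
          simpa using h2.mul_const R
        exact (h0.eventually_lt_const zero_lt_one).mono (fun t ht => ht.le)
      have htW : ∀ᶠ t in nhdsWithin (0:ℝ) (Set.Ioi 0), (max C 1) * t ^ (-W) < ε := by
        have h0 : Filter.Tendsto (fun t : ℝ => (max C 1) * t ^ (-W))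
            (nhdsWithin 0 (Set.Ioi 0)) (nhds 0) := by
          have hw : 0 < -W := by linarith
          have h1 : Filter.Tendsto (fun t : ℝ => t ^ (-W)) (nhds (0:ℝ)) (nhds 0) := by
            have := (Real.continuousAt_rpow_const 0 (-W) (Or.inr hw.le)).tendsto
            rwa [Real.zero_rpow hw.ne'] at this
          have h2 : Filter.Tendsto (fun t : ℝ => t ^ (-W))
              (nhdsWithin (0:ℝ) (Set.Ioi 0)) (nhds 0) := h1.mono_left nhdsWithin_le_nhds
          simpa using h2.const_mul (max C 1)
        exact h0.eventually_lt_const hε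
      filter_upwards [self_mem_nhdsWithin, Ioo_mem_nhdsGT_of_mem ⟨le_refl (0:ℝ), zero_lt_one⟩,
        htsmall, htW] with t ht ht1 hts htw
      intro y hy
      have ht' : 0 < t := ht
      have htpos : (0:ℝ) < t ^ W := Real.rpow_pos_of_pos ht' W
      have hball : Dmap μ t y ∈ Metric.closedBall (0 : Fin m → ℂ) 1 := by
        rw [Metric.mem_closedBall, dist_zero_right]
        calc ‖Dmap μ t y‖ ≤ t ^ ν * ‖y‖ := Dmap_norm_le μ hνle ht' ht1.2.le y
        _ ≤ t ^ ν * R := by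
            exact mul_le_mul_of_nonneg_left hy (Real.rpow_nonneg ht'.le _)
        _ ≤ 1 := hts
      calc ‖F (Dmap μ t y)‖ ≤ max C 1 := hC1 _ hball
      _ = (max C 1) * t ^ (-W) * t ^ W := by
          rw [mul_assoc, ← Real.rpow_add ht', neg_add_cancel, Real.rpow_zero, mul_one]
      _ ≤ ε * t ^ W := by
          have := htw.le
          exact mul_le_mul_of_nonneg_right this htpos.le
    | succ k ih =>
      intro F hF W hvan hW ε hε
      by_cases hk : W < k * ν
      · exact ih F hF W hvan hk ε hε
      · push_neg at hk
        have hW0 : (0:ℝ) ≤ W := le_trans (by positivity) hk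
        have hF0 : F 0 = 0 := hvan [] (by simpa using hW0)
        set ε' : ℝ := ε / (2 * m * R + 1) with hε'def
        have hε' : 0 < ε' := by
          apply div_pos hε
          have : (0:ℝ) ≤ 2 * m * R := by positivity
          linarith
        have hIH : ∀ jb : Fin m × Bool,
            ∀ᶠ t in nhdsWithin (0:ℝ) (Set.Ioi 0), ∀ y : Fin m → ℂ, ‖y‖ ≤ R →
              ‖rpd jb.1 jb.2 F (Dmap μ t y)‖ ≤ ε' * t ^ (W - μ jb.1) := by
          intro jb
          apply ih (rpd jb.1 jb.2 F) (rpd_contDiff hF jb.1 jb.2) (W - μ jb.1)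
          · intro L hL
            have : rpdIter L (rpd jb.1 jb.2 F) 0 = rpdIter (jb :: L) F 0 := rfl
            rw [this]
            apply hvan
            simp only [List.map_cons, List.sum_cons]
            linarith
          · have := hνle jb.1
            push_cast
            push_cast at hW
            linarith
          · exact hε'
        rw [← Filter.eventually_all] at hIH
        filter_upwards [self_mem_nhdsWithin, hIH] with t ht hjb
        intro y hy
        have ht' : (0:ℝ) < t := ht
        -- mean value estimate along the segment s ↦ F (s • Dmap μ t y)
        set c : Fin m → ℂ := Dmap μ t y with hc
        have hder : ∀ s ∈ Set.Icc (0:ℝ) 1,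
            HasDerivWithinAt (fun s : ℝ => F (s • c)) (fderiv ℝ F (s • c) c) (Set.Icc 0 1) s := by
          intro s _
          have h1 : HasDerivAt (fun s : ℝ => s • c) c s := by
            simpa using (hasDerivAt_id s).smul_const c
          have h2 : HasFDerivAt F (fderiv ℝ F (s • c)) (s • c) :=
            (smooth_diffAt hF (s • c)).hasFDerivAt
          exact (h2.comp_hasDerivAt s h1).hasDerivWithinAt
        have hbound : ∀ s ∈ Set.Ico (0:ℝ) 1, ‖fderiv ℝ F (s • c) c‖ ≤ 2 * m * R * (ε' * t ^ W) := by
          intro s hs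
          have hs0 : 0 ≤ s := hs.1
          have hs1 : s ≤ 1 := hs.2.le
          have hpt : s • c = Dmap μ t (s • y) := Dmap_smul μ t s y
          have hys : ‖s • y‖ ≤ R := by
            rw [norm_smul, Real.norm_eq_abs, _root_.abs_of_nonneg hs0]
            calc s * ‖y‖ ≤ 1 * ‖y‖ := mul_le_mul_of_nonneg_right hs1 (norm_nonneg _)
            _ = ‖y‖ := one_mul _
            _ ≤ R := hy
          have hsplit : ∀ j : Fin m, (Pi.single j (c j) : Fin m → ℂ) =
              (c j).re • (Pi.single j (1:ℂ) : Fin m → ℂ)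
              + (c j).im • (Pi.single j Complex.I : Fin m → ℂ) := by
            intro j
            rw [← Pi.single_smul, ← Pi.single_smul, ← Pi.single_add]
            have hval : ((c j).re • (1:ℂ) + (c j).im • Complex.I) = c j := by
              simp only [Complex.real_smul, mul_one]
              exact Complex.re_add_im _
            rw [hval]
          have hdecomp : fderiv ℝ F (s • c) c = ∑ j : Fin m, ((c j).re • rpd j false F (s • c)
              + (c j).im • rpd j true F (s • c)) := by
            calc fderiv ℝ F (s • c) c
                = fderiv ℝ F (s • c) (∑ j : Fin m, Pi.single j (c j)) := by
                  rw [Finset.univ_sum_single]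
            _ = ∑ j : Fin m, fderiv ℝ F (s • c) (Pi.single j (c j)) := map_sum _ _ _
            _ = ∑ j : Fin m, ((c j).re • rpd j false F (s • c)
                  + (c j).im • rpd j true F (s • c)) := by
                  apply Finset.sum_congr rfl
                  intro j _
                  rw [hsplit j, ContinuousLinearMap.map_add, ContinuousLinearMap.map_smul,
                    ContinuousLinearMap.map_smul]
                  rfl
          rw [hdecomp]
          have hterm : ∀ j : Fin m, ‖(c j).re • rpd j false F (s • c)
              + (c j).im • rpd j true F (s • c)‖ ≤ 2 * R * (ε' * t ^ W) := by
            intro j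
            have hcj : ‖c j‖ ≤ t ^ μ j * R := by
              rw [hc, Dmap_apply, norm_smul, Real.norm_eq_abs,
                _root_.abs_of_nonneg (Real.rpow_nonneg ht'.le _)]
              exact mul_le_mul_of_nonneg_left (le_trans (norm_le_pi_norm y j) hy)
                (Real.rpow_nonneg ht'.le _)
            have hre : |(c j).re| ≤ t ^ μ j * R := le_trans (Complex.abs_re_le_norm _) hcj
            have him : |(c j).im| ≤ t ^ μ j * R := le_trans (Complex.abs_im_le_norm _) hcj
            have hrpd : ∀ b : Bool, ‖rpd j b F (s • c)‖ ≤ ε' * t ^ (W - μ j) := by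
              intro b
              rw [hpt]
              exact hjb (j, b) (s • y) hys
            have hmul : t ^ μ j * (ε' * t ^ (W - μ j)) = ε' * t ^ W := by
              rw [← mul_assoc, mul_comm (t ^ μ j) ε', mul_assoc, ← Real.rpow_add ht']
              ring_nf
            calc ‖(c j).re • rpd j false F (s • c) + (c j).im • rpd j true F (s • c)‖
                ≤ ‖(c j).re • rpd j false F (s • c)‖ + ‖(c j).im • rpd j true F (s • c)‖ :=
                  norm_add_le _ _
            _ = |(c j).re| * ‖rpd j false F (s • c)‖ + |(c j).im| * ‖rpd j true F (s • c)‖ := by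
                  rw [norm_smul, norm_smul, Real.norm_eq_abs, Real.norm_eq_abs]
            _ ≤ (t ^ μ j * R) * (ε' * t ^ (W - μ j)) + (t ^ μ j * R) * (ε' * t ^ (W - μ j)) := by
                  apply add_le_add
                  · exact mul_le_mul hre (hrpd false) (norm_nonneg _)
                      (by positivity)
                  · exact mul_le_mul him (hrpd true) (norm_nonneg _)
                      (by positivity)
            _ = 2 * R * (t ^ μ j * (ε' * t ^ (W - μ j))) := by ring
            _ = 2 * R * (ε' * t ^ W) := by rw [hmul]
          calc ‖∑ j : Fin m, ((c j).re • rpd j false F (s • c) + (c j).im • rpd j true F (s • c))‖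
              ≤ ∑ j : Fin m, ‖(c j).re • rpd j false F (s • c) + (c j).im • rpd j true F (s • c)‖ :=
                norm_sum_le _ _
          _ ≤ ∑ _j : Fin m, 2 * R * (ε' * t ^ W) := Finset.sum_le_sum (fun j _ => hterm j)
          _ = m * (2 * R * (ε' * t ^ W)) := by rw [Finset.sum_const, Finset.card_univ,
                Fintype.card_fin, nsmul_eq_mul]
          _ = 2 * m * R * (ε' * t ^ W) := by ring
        have hmvt := norm_image_sub_le_of_norm_deriv_le_segment' hder hbound 1
          (Set.right_mem_Icc.mpr zero_le_one)
        simp only [one_smul, zero_smul, hF0, sub_zero, mul_one] at hmvt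
        calc ‖F (Dmap μ t y)‖ = ‖F c‖ := rfl
        _ ≤ 2 * m * R * (ε' * t ^ W) := hmvt
        _ ≤ ε * t ^ W := by
            have htW : (0:ℝ) < t ^ W := Real.rpow_pos_of_pos ht' W
            rw [hε'def]
            rw [show 2 * (m:ℝ) * R * (ε / (2 * m * R + 1) * t ^ W)
              = (2 * m * R) / (2 * m * R + 1) * (ε * t ^ W) by ring]
            have hle : (2 * (m:ℝ) * R) / (2 * m * R + 1) ≤ 1 := by
              rw [div_le_one (by positivity)]
              linarith
            nlinarith [mul_pos hε htW]
  obtain ⟨k, hk⟩ := exists_nat_gt (W / ν)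
  have hWk : W < k * ν := by
    rw [div_lt_iff₀ hν] at hk
    linarith
  exact key k F hF W hvan hWk ε hε

end Aniso

section Helpers

variable {m : ℕ}

lemma wder_invariant {g : (Fin m → ℂ) → ℂ} (hg : ContDiff ℝ (⊤ : ℕ∞) g)
    (A : (Fin m → ℂ) →L[ℝ] (Fin m → ℂ)) (hgA : (fun x => g (A x)) = g) (j : Fin m)
    (h1 : A (Pi.single j 1) = Pi.single j 1)
    (hI : A (Pi.single j Complex.I) = Pi.single j Complex.I) (x : Fin m → ℂ) :
    wder j g x = wder j g (A x) := by
  conv_lhs => rw [← hgA]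
  rw [wder_comp_scale hg A j 1 (by rw [h1, one_smul]) (by rw [hI, one_smul]) x, one_smul]

lemma wderBar_invariant {g : (Fin m → ℂ) → ℂ} (hg : ContDiff ℝ (⊤ : ℕ∞) g)
    (A : (Fin m → ℂ) →L[ℝ] (Fin m → ℂ)) (hgA : (fun x => g (A x)) = g) (j : Fin m)
    (h1 : A (Pi.single j 1) = Pi.single j 1)
    (hI : A (Pi.single j Complex.I) = Pi.single j Complex.I) (x : Fin m → ℂ) :
    wderBar j g x = wderBar j g (A x) := by
  conv_lhs => rw [← hgA]
  rw [wderBar_comp_scale hg A j 1 (by rw [h1, one_smul]) (by rw [hI, one_smul]) x, one_smul]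

lemma wder_dilate (μ : Fin m → ℝ) {g : (Fin m → ℂ) → ℂ} (hg : ContDiff ℝ (⊤ : ℕ∞) g) (t : ℝ)
    (hhom : (fun x => g (Dmap μ t x)) = fun x => t • g x) (j : Fin m) (x : Fin m → ℂ) :
    (t ^ μ j : ℝ) • wder j g (Dmap μ t x) = t • wder j g x := by
  have h1 := wder_comp_scale hg (Dmap μ t) j (t ^ μ j)
    (Dmap_single μ t j 1) (Dmap_single μ t j Complex.I) x
  rw [hhom] at h1
  rw [← h1, wder_smul_real hg t j x]

lemma chess_dilate (μ : Fin m → ℝ) {g : (Fin m → ℂ) → ℂ} (hg : ContDiff ℝ (⊤ : ℕ∞) g) (t : ℝ)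
    (hhom : (fun x => g (Dmap μ t x)) = fun x => t • g x) (j k : Fin m) (x : Fin m → ℂ) :
    (t ^ μ j : ℝ) • ((t ^ μ k : ℝ) • chess g j k (Dmap μ t x)) = t • chess g j k x := by
  have hbar : (fun y => (t ^ μ k : ℝ) • wderBar k g (Dmap μ t y))
      = fun y => t • wderBar k g y := by
    funext y
    have h1 := wderBar_comp_scale hg (Dmap μ t) k (t ^ μ k)
      (Dmap_single μ t k 1) (Dmap_single μ t k Complex.I) y
    rw [hhom] at h1
    rw [← h1, wderBar_smul_real hg t k y]
  have hsm : ContDiff ℝ (⊤ : ℕ∞) (fun y => wderBar k g (Dmap μ t y)) :=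
    (wderBar_contDiff hg k).comp (Dmap μ t).contDiff
  have hcomp : wder j (fun y => wderBar k g (Dmap μ t y)) x
      = (t ^ μ j : ℝ) • wder j (wderBar k g) (Dmap μ t x) :=
    wder_comp_scale (wderBar_contDiff hg k) (Dmap μ t) j _
      (Dmap_single μ t j 1) (Dmap_single μ t j Complex.I) x
  calc (t ^ μ j : ℝ) • ((t ^ μ k : ℝ) • chess g j k (Dmap μ t x))
      = (t ^ μ k : ℝ) • ((t ^ μ j : ℝ) • wder j (wderBar k g) (Dmap μ t x)) := smul_comm _ _ _
    _ = (t ^ μ k : ℝ) • wder j (fun y => wderBar k g (Dmap μ t y)) x := by rw [hcomp]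
    _ = wder j (fun y => (t ^ μ k : ℝ) • wderBar k g (Dmap μ t y)) x :=
        (wder_smul_real hsm _ j x).symm
    _ = wder j (fun y => t • wderBar k g y) x := by rw [hbar]
    _ = t • wder j (wderBar k g) x := wder_smul_real (wderBar_contDiff hg k) t j x
    _ = t • chess g j k x := rfl

end Helpers
end Stmt6

set_option maxHeartbeats 4000000 in
open Stmt6 in
/-- Let `μ = (1, μ_2, …, μ_n)` with `1 > μ_2 ≥ … ≥ μ_n > 0` be a weight and
`r = -2 Re z_1 + p + E`, where `p` is a weighted homogeneous polynomial of weight `1` in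
`(z_2, …, z_n, z̄_2, …, z̄_n)` and `E` is smooth with all Taylor monomials of weight `> 1`
(equivalently, all iterated Wirtinger derivatives at `0` of total weight `≤ 1` vanish).
If the boundary `{r = 0}` is pseudoconvex near `0`, then the model `{r₀ = 0}`,
`r₀ = -2 Re z_1 + p`, is pseudoconvex. -/
theorem stmt_6 (n : ℕ) (μ : Fin (n + 1) → ℝ)
    (hμ0 : μ 0 = 1) (hμlt : ∀ j : Fin (n + 1), j ≠ 0 → μ j < 1)
    (hμmono : Antitone μ) (hμpos : ∀ j, 0 < μ j)
    (S : Finset ((Fin n → ℕ) × (Fin n → ℕ))) (Cc : (Fin n → ℕ) × (Fin n → ℕ) → ℂ)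
    (pf : (Fin n → ℂ) → ℂ)
    (hpf : ∀ w, pf w = ∑ ab ∈ S, Cc ab *
      (∏ j, (w j) ^ (ab.1 j)) * (∏ j, (starRingEnd ℂ (w j)) ^ (ab.2 j)))
    (hpreal : ∀ w, (pf w).im = 0)
    (hweight : ∀ ab ∈ S, ∑ j : Fin n, ((ab.1 j + ab.2 j : ℕ) : ℝ) * μ j.succ = 1)
    (E : (Fin (n + 1) → ℂ) → ℝ) (hE : ContDiff ℝ (⊤ : ℕ∞) E)
    (hEsmall : ∀ L : List (Fin (n + 1) × Bool),
      (L.map (fun jb => μ jb.1)).sum ≤ 1 →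
      wIter L (fun z => ((E z : ℝ) : ℂ)) 0 = 0)
    (r r₀ : (Fin (n + 1) → ℂ) → ℂ)
    (hr : ∀ z, r z = (((-2 : ℝ) * (z 0).re + (pf (fun j => z j.succ)).re + E z : ℝ) : ℂ))
    (hr₀ : ∀ z, r₀ z = (((-2 : ℝ) * (z 0).re + (pf (fun j => z j.succ)).re : ℝ) : ℂ))
    (hpsc : ∃ U ∈ nhds (0 : Fin (n + 1) → ℂ), ∀ z ∈ U, r z = 0 →
      ∀ a : Fin (n + 1) → ℂ, (∑ j, wder j r z * a j) = 0 →
      0 ≤ (∑ j, ∑ k, chess r j k z * a j * starRingEnd ℂ (a k)).re) :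
    ∀ z : Fin (n + 1) → ℂ, r₀ z = 0 →
      ∀ a : Fin (n + 1) → ℂ, (∑ j, wder j r₀ z * a j) = 0 →
      0 ≤ (∑ j, ∑ k, chess r₀ j k z * a j * starRingEnd ℂ (a k)).re := by
  classical
  intro z _hz a _ha
  -- ## basic facts about the weights
  set ν : ℝ := μ (Fin.last n) with hνdef
  have hν : 0 < ν := hμpos _
  have hνle : ∀ j, ν ≤ μ j := fun j => hμmono (Fin.le_last j)
  have hμ1 : ∀ j, μ j ≤ 1 := by
    intro j
    rcases eq_or_ne j 0 with rfl | hj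
    · exact hμ0.le
    · exact (hμlt j hj).le
  -- ## smoothness of pf
  have hpsm : ContDiff ℝ (⊤ : ℕ∞) pf := by
    have hrep : pf = fun w => ∑ ab ∈ S, Cc ab *
        (∏ j, (w j) ^ (ab.1 j)) * (∏ j, (starRingEnd ℂ (w j)) ^ (ab.2 j)) := funext hpf
    rw [hrep]
    apply ContDiff.sum
    intro ab _
    apply ContDiff.mul
    · apply ContDiff.mul contDiff_const
      exact contDiff_prod (fun j _ =>
        ((ContinuousLinearMap.proj j : (Fin n → ℂ) →L[ℝ] ℂ).contDiff).pow _)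
    · apply contDiff_prod
      intro j _
      apply ContDiff.pow
      exact Complex.conjCLE.contDiff.comp
        ((ContinuousLinearMap.proj j : (Fin n → ℂ) →L[ℝ] ℂ).contDiff)
  -- ## weighted homogeneity of pf
  have hrpow_prod : ∀ t : ℝ, 0 < t → ∀ e : Fin n → ℕ,
      (∏ j, ((t ^ μ j.succ : ℝ)) ^ (e j)) = t ^ (∑ j, (e j : ℝ) * μ j.succ) := by
    intro t ht e
    rw [Real.rpow_sum_of_pos ht]
    apply Finset.prod_congr rfl
    intro j _
    rw [← Real.rpow_natCast (t ^ μ j.succ) (e j), ← Real.rpow_mul ht.le, mul_comm]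
  have hphom : ∀ t : ℝ, 0 < t → ∀ w : Fin n → ℂ,
      pf (fun j => ((t ^ μ j.succ : ℝ) : ℂ) * w j) = (t : ℂ) * pf w := by
    intro t ht w
    rw [hpf, hpf, Finset.mul_sum]
    apply Finset.sum_congr rfl
    intro ab hab
    have e1 : (∏ j, ((((t ^ μ j.succ : ℝ)):ℂ) * w j) ^ ab.1 j)
        = (((∏ j, (t ^ μ j.succ) ^ ab.1 j : ℝ)) : ℂ) * ∏ j, (w j) ^ ab.1 j := by
      push_cast
      rw [← Finset.prod_mul_distrib]
      apply Finset.prod_congr rfl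
      intro j _
      rw [mul_pow]
    have e2 : (∏ j, ((starRingEnd ℂ) ((((t ^ μ j.succ : ℝ)):ℂ) * w j)) ^ ab.2 j)
        = (((∏ j, (t ^ μ j.succ) ^ ab.2 j : ℝ)) : ℂ) * ∏ j, ((starRingEnd ℂ) (w j)) ^ ab.2 j := by
      push_cast
      rw [← Finset.prod_mul_distrib]
      apply Finset.prod_congr rfl
      intro j _
      rw [map_mul, Complex.conj_ofReal, mul_pow]
    have e3 : ((∏ j, (t ^ μ j.succ) ^ ab.1 j : ℝ)) * ((∏ j, (t ^ μ j.succ) ^ ab.2 j : ℝ)) = t := by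
      rw [hrpow_prod t ht, hrpow_prod t ht, ← Real.rpow_add ht]
      have hsum : (∑ j, (ab.1 j : ℝ) * μ j.succ) + (∑ j, (ab.2 j : ℝ) * μ j.succ)
          = ∑ j : Fin n, ((ab.1 j + ab.2 j : ℕ) : ℝ) * μ j.succ := by
        rw [← Finset.sum_add_distrib]
        apply Finset.sum_congr rfl
        intro j _
        push_cast
        ring
      rw [hsum, hweight ab hab, Real.rpow_one]
    have e4 : (((∏ j, (t ^ μ j.succ) ^ ab.1 j : ℝ)) : ℂ)
        * (((∏ j, (t ^ μ j.succ) ^ ab.2 j : ℝ)) : ℂ) = (t : ℂ) := by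
      rw [← Complex.ofReal_mul, e3]
    rw [e1, e2, ← e4]
    ring
  -- ## the three pieces of r
  set E' : (Fin (n+1) → ℂ) → ℂ := fun z => ((E z : ℝ) : ℂ) with hE'def
  have hE's : ContDiff ℝ (⊤ : ℕ∞) E' := Complex.ofRealCLM.contDiff.comp (hE.of_le (by simp))
  set Q : (Fin (n+1) → ℂ) → ℂ := fun z => (((pf (fun i => z i.succ)).re : ℝ) : ℂ) with hQdef
  have hQsm : ContDiff ℝ (⊤ : ℕ∞) Q := by
    apply Complex.ofRealCLM.contDiff.comp
    apply Complex.reCLM.contDiff.comp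
    apply hpsm.comp
    exact (ContinuousLinearMap.pi (fun i : Fin n =>
      (ContinuousLinearMap.proj i.succ : (Fin (n+1) → ℂ) →L[ℝ] ℂ))).contDiff
  set ℓf : (Fin (n+1) → ℂ) → ℂ := fun z => (((-2:ℝ) * (z 0).re : ℝ) : ℂ) with hℓdef
  set Lc : (Fin (n+1) → ℂ) →L[ℝ] ℂ :=
    Complex.ofRealCLM.comp ((-2:ℝ) • (Complex.reCLM.comp
      (ContinuousLinearMap.proj 0))) with hLcdef
  have hℓL : ℓf = fun z => Lc z := by
    funext w
    simp [hℓdef, hLcdef, smul_eq_mul]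
  have hℓsm : ContDiff ℝ (⊤ : ℕ∞) ℓf := by rw [hℓL]; exact Lc.contDiff
  have hfderivℓ : ∀ x v, fderiv ℝ ℓf x v = Lc v := by
    intro x v
    rw [hℓL, show (fun z => Lc z) = ⇑Lc from rfl, Lc.fderiv]
  have hLc_single : ∀ (j : Fin (n+1)) (v : ℂ),
      Lc (Pi.single j v) = if j = 0 then ((-2 * v.re : ℝ) : ℂ) else 0 := by
    intro j v
    rcases eq_or_ne j 0 with rfl | hj
    · simp [hLcdef]
    · simp [hLcdef, Pi.single_apply, hj, Ne.symm hj]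
  have hwl0 : ∀ x, wder 0 ℓf x = -1 := by
    intro x
    simp only [wder, hfderivℓ, hLc_single, if_pos rfl]
    norm_num
  have hwlj : ∀ (j : Fin (n+1)), j ≠ 0 → ∀ x, wder j ℓf x = 0 := by
    intro j hj x
    simp only [wder, hfderivℓ, hLc_single, if_neg hj]
    norm_num
  have hchessℓ : ∀ j k x, chess ℓf j k x = 0 := by
    intro j k x
    have hb : wderBar k ℓf = fun _ =>
        ((Lc (Pi.single k 1) + Complex.I * Lc (Pi.single k Complex.I)) / 2) := by
      funext y
      simp only [wderBar, hfderivℓ]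
    show wder j (wderBar k ℓf) x = 0
    rw [hb]
    exact wder_const _ j x
  have hr₀split : r₀ = fun w => ℓf w + Q w := by
    funext w
    rw [hr₀ w]
    simp only [hℓdef, hQdef]
    push_cast
    ring
  have hrsplit : r = fun w => r₀ w + E' w := by
    funext w
    rw [hr w, hr₀ w]
    simp only [hE'def]
    push_cast
    ring
  have hr₀sm : ContDiff ℝ (⊤ : ℕ∞) r₀ := by rw [hr₀split]; exact hℓsm.add hQsm
  -- ## the projection killing the 0-th coordinate; invariance of Q
  set pim : (Fin (n+1) → ℂ) →L[ℝ] (Fin (n+1) → ℂ) :=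
    ContinuousLinearMap.pi (fun i => if i = 0 then 0 else ContinuousLinearMap.proj i)
    with hpimdef
  have hpim_apply : ∀ (x : Fin (n+1) → ℂ) i, pim x i = if i = 0 then 0 else x i := by
    intro x i
    rcases eq_or_ne i 0 with rfl | hi
    · simp [hpimdef]
    · simp [hpimdef, hi]
  have hpim0 : ∀ v : ℂ, pim (Pi.single 0 v) = 0 := by
    intro v
    funext i
    rw [hpim_apply]
    rcases eq_or_ne i 0 with rfl | hi
    · simp
    · simp [hi, Pi.single_apply, Ne.symm hi]
  have hpimj : ∀ (j : Fin (n+1)), j ≠ 0 → ∀ v : ℂ,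
      pim (Pi.single j v) = Pi.single j v := by
    intro j hj v
    funext i
    rw [hpim_apply]
    rcases eq_or_ne i 0 with rfl | hi
    · simp [Pi.single_apply, Ne.symm hj]
    · simp [hi]
  have hQpim : (fun x => Q (pim x)) = Q := by
    funext x
    have htail : (fun i : Fin n => pim x i.succ) = fun i => x i.succ := by
      funext i
      rw [hpim_apply]
      exact if_neg (Fin.succ_ne_zero i)
    simp only [hQdef, htail]
  have hwQ0 : ∀ x, wder 0 Q x = 0 := by
    intro x
    conv_lhs => rw [← hQpim]
    exact wder_comp_zero hQsm pim 0 (hpim0 1) (hpim0 Complex.I) x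
  have hbarQ0 : ∀ x, wderBar 0 Q x = 0 := by
    intro x
    conv_lhs => rw [← hQpim]
    exact wderBar_comp_zero hQsm pim 0 (hpim0 1) (hpim0 Complex.I) x
  have hwQpim : ∀ (j : Fin (n+1)), j ≠ 0 → ∀ x, wder j Q x = wder j Q (pim x) :=
    fun j hj x => wder_invariant hQsm pim hQpim j (hpimj j hj 1) (hpimj j hj Complex.I) x
  have hbarQpim : ∀ (k : Fin (n+1)), k ≠ 0 →
      (fun x => wderBar k Q (pim x)) = wderBar k Q := by
    intro k hk
    funext x
    exact (wderBar_invariant hQsm pim hQpim k (hpimj k hk 1) (hpimj k hk Complex.I) x).symm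
  have hchessQpim : ∀ (j k : Fin (n+1)), j ≠ 0 → k ≠ 0 → ∀ x,
      chess Q j k x = chess Q j k (pim x) := by
    intro j k hj hk x
    exact wder_invariant (wderBar_contDiff hQsm k) pim (hbarQpim k hk) j
      (hpimj j hj 1) (hpimj j hj Complex.I) x
  have hchessQj0 : ∀ j x, chess Q j 0 x = 0 := by
    intro j x
    show wder j (wderBar 0 Q) x = 0
    rw [show wderBar 0 Q = fun _ => (0:ℂ) from funext hbarQ0]
    exact wder_const 0 j x
  have hchessQ0k : ∀ (k : Fin (n+1)), k ≠ 0 → ∀ x, chess Q 0 k x = 0 := by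
    intro k hk x
    show wder 0 (wderBar k Q) x = 0
    conv_lhs => rw [← hbarQpim k hk]
    exact wder_comp_zero (wderBar_contDiff hQsm k) pim 0 (hpim0 1) (hpim0 Complex.I) x
  have hchessQ0 : ∀ (j k : Fin (n+1)), j = 0 ∨ k = 0 → ∀ x, chess Q j k x = 0 := by
    intro j k hjk x
    rcases hjk with rfl | rfl
    · rcases eq_or_ne k 0 with rfl | hk
      · exact hchessQj0 0 x
      · exact hchessQ0k k hk x
    · exact hchessQj0 j x
  have hchessr₀ : ∀ j k x, chess r₀ j k x = chess Q j k x := by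
    intro j k x
    rw [hr₀split, chess_add hℓsm hQsm, hchessℓ, zero_add]
  -- ## homogeneity of Q and its derivatives
  have hQhom : ∀ t : ℝ, 0 < t → (fun x => Q (Dmap μ t x)) = fun x => t • Q x := by
    intro t ht
    funext x
    simp only [hQdef]
    have htail : (fun i : Fin n => Dmap μ t x i.succ)
        = fun i => ((t ^ μ i.succ : ℝ) : ℂ) * x i.succ := by
      funext i
      rw [Dmap_apply, Complex.real_smul]
    rw [htail, hphom t ht, Complex.real_smul]
    simp [Complex.ofReal_mul]
  have hQw_dil : ∀ (t : ℝ), 0 < t → ∀ j x,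
      (t ^ μ j : ℝ) • wder j Q (Dmap μ t x) = t • wder j Q x :=
    fun t ht j x => wder_dilate μ hQsm t (hQhom t ht) j x
  have hQc_dil : ∀ (t : ℝ), 0 < t → ∀ j k x,
      (t ^ μ j : ℝ) • ((t ^ μ k : ℝ) • chess Q j k (Dmap μ t x)) = t • chess Q j k x :=
    fun t ht j k x => chess_dilate μ hQsm t (hQhom t ht) j k x
  -- ## rewrite the goal
  have hgoal : (∑ j, ∑ k, chess r₀ j k z * a j * starRingEnd ℂ (a k))
      = ∑ j, ∑ k, chess Q j k z * a j * starRingEnd ℂ (a k) := by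
    apply Finset.sum_congr rfl
    intro j _
    apply Finset.sum_congr rfl
    intro k _
    rw [hchessr₀]
  rw [hgoal]
  -- ## reduce to: for every ε > 0 the Levi form is ≥ -ε
  have main : ∀ ε : ℝ, 0 < ε →
      -ε ≤ (∑ j, ∑ k, chess Q j k z * a j * starRingEnd ℂ (a k)).re := by
    intro ε hε
    -- constants
    set z' : Fin n → ℂ := fun i => z i.succ with hz'def
    set K : ℝ := |(pf z').re| + 1 with hKdef
    have hK : 0 < K := by positivity
    set R : ℝ := ‖z‖ + K + 1 with hRdef
    have hR : 0 < R := by rw [hRdef]; linarith [norm_nonneg z]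
    have hzR : ‖z‖ ≤ R := by rw [hRdef]; linarith
    have hKR : K ≤ R := by rw [hRdef]; linarith [norm_nonneg z]
    set B₁ : ℝ := ∑ i : Fin n, (‖wder i.succ Q z‖ + 1) * ‖a i.succ‖ with hB₁def
    have hB₁ : 0 ≤ B₁ := Finset.sum_nonneg (fun i _ => by positivity)
    set cvec : Fin (n+1) → ℝ := fun j => if j = 0 then 2 * B₁ else ‖a j‖ with hcvecdef
    have hcvec : ∀ j, 0 ≤ cvec j := by
      intro j
      rw [hcvecdef]
      dsimp only
      split
      · linarith
      · positivity
    set M : ℝ := (∑ j, cvec j)^2 with hMdef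
    have hM : 0 ≤ M := sq_nonneg _
    set ε₄ : ℝ := ε / (M + 1) with hε₄def
    have hε₄ : 0 < ε₄ := div_pos hε (by linarith)
    -- the vanishing hypotheses converted to real partials
    have hvan_gen : ∀ (F : (Fin (n+1) → ℂ) → ℂ), ContDiff ℝ (⊤ : ℕ∞) F → ∀ W : ℝ,
        (∀ L' : List (Fin (n+1) × Bool), (L'.map (fun jb => μ jb.1)).sum ≤ W →
          wIter L' F 0 = 0) →
        (∀ L : List (Fin (n+1) × Bool), (L.map (fun jb => μ jb.1)).sum ≤ W →
          rpdIter L F 0 = 0) := by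
      intro F hF W h L hL
      exact rpdIter_zero_of_wIter μ L F hF (fun L' hL' => h L' (le_trans hL' hL))
    have hEv1 : ∀ᶠ t in nhdsWithin (0:ℝ) (Set.Ioi 0), ∀ y : Fin (n+1) → ℂ, ‖y‖ ≤ R →
        ‖E' (Dmap μ t y)‖ ≤ 1 * t ^ (1:ℝ) :=
      aniso μ ν hν hνle E' hE's 1 (hvan_gen E' hE's 1 hEsmall) R 1 hR one_pos
    have hEvw : ∀ j : Fin (n+1), ∀ᶠ t in nhdsWithin (0:ℝ) (Set.Ioi 0),
        ∀ y : Fin (n+1) → ℂ, ‖y‖ ≤ R →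
        ‖wder j E' (Dmap μ t y)‖ ≤ (1/2) * t ^ (1 - μ j) := by
      intro j
      apply aniso μ ν hν hνle _ (wder_contDiff hE's j) _ _ R _ hR (by norm_num)
      apply hvan_gen _ (wder_contDiff hE's j)
      intro L' hL'
      have hw : wIter L' (wder j E') = wIter ((j, false) :: L') E' := rfl
      rw [hw]
      apply hEsmall
      simp only [List.map_cons, List.sum_cons]
      linarith
    have hEvc : ∀ p : Fin (n+1) × Fin (n+1), ∀ᶠ t in nhdsWithin (0:ℝ) (Set.Ioi 0),
        ∀ y : Fin (n+1) → ℂ, ‖y‖ ≤ R →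
        ‖chess E' p.1 p.2 (Dmap μ t y)‖ ≤ ε₄ * t ^ (1 - μ p.1 - μ p.2) := by
      intro p
      apply aniso μ ν hν hνle _ (chess_contDiff hE's p.1 p.2) _ _ R _ hR hε₄
      apply hvan_gen _ (chess_contDiff hE's p.1 p.2)
      intro L' hL'
      have hw : wIter L' (chess E' p.1 p.2)
          = wIter ((p.2, true) :: (p.1, false) :: L') E' := rfl
      rw [hw]
      apply hEsmall
      simp only [List.map_cons, List.sum_cons]
      linarith
    obtain ⟨U, hU, hps⟩ := hpsc
    obtain ⟨ρ, hρpos, hball⟩ := Metric.mem_nhds_iff.mp hU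
    have hρsm : ∀ᶠ t in nhdsWithin (0:ℝ) (Set.Ioi 0), t ^ ν * R < ρ := by
      have h1 : Filter.Tendsto (fun t : ℝ => t ^ ν) (nhds (0:ℝ)) (nhds 0) := by
        have := (Real.continuousAt_rpow_const 0 ν (Or.inr hν.le)).tendsto
        rwa [Real.zero_rpow hν.ne'] at this
      have h2 : Filter.Tendsto (fun t : ℝ => t ^ ν * R)
          (nhdsWithin (0:ℝ) (Set.Ioi 0)) (nhds 0) := by
        simpa using (h1.mono_left nhdsWithin_le_nhds).mul_const R
      exact h2.eventually_lt_const hρpos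
    have ht01 : ∀ᶠ t in nhdsWithin (0:ℝ) (Set.Ioi 0), t ∈ Set.Ioo (0:ℝ) 1 := by
      have hm := Ioo_mem_nhdsGT_of_mem (show (0:ℝ) ∈ Set.Ico (0:ℝ) 1 from ⟨le_rfl, zero_lt_one⟩)
      exact Filter.eventually_of_mem hm (fun t ht => ht)
    have hbig := (((ht01.and hEv1).and (Filter.eventually_all.mpr hEvw)).and
      (Filter.eventually_all.mpr hEvc)).and hρsm
    obtain ⟨t, ⟨⟨⟨⟨ht0, ht1⟩, hE1⟩, hwE⟩, hcE⟩, hρt⟩ := hbig.exists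
    -- solve for the boundary point via IVT
    have hnormE' : ∀ w, ‖E' w‖ = |E w| := by
      intro w
      rw [hE'def]
      rw [Complex.norm_real, Real.norm_eq_abs]
    have hupd : ∀ x : ℝ, Function.update (Dmap μ t z) 0 ((x : ℝ) : ℂ)
        = Dmap μ t (Function.update z 0 (((x / t : ℝ)) : ℂ)) := by
      intro x
      funext i
      rcases eq_or_ne i 0 with rfl | hi
      · rw [Function.update_self, Dmap_apply, Function.update_self, hμ0, Real.rpow_one,
          Complex.real_smul, ← Complex.ofReal_mul]
        congr 1
        field_simp
      · rw [Function.update_of_ne hi, Dmap_apply, Dmap_apply, Function.update_of_ne hi]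
    have hyRnorm : ∀ x : ℝ, |x| ≤ K * t →
        ‖Function.update z 0 (((x / t : ℝ)) : ℂ)‖ ≤ R := by
      intro x hx
      rw [pi_norm_le_iff_of_nonneg hR.le]
      intro i
      rcases eq_or_ne i 0 with rfl | hi
      · rw [Function.update_self, Complex.norm_real, Real.norm_eq_abs]
        have habs : |x / t| = |x| / t := by rw [abs_div, abs_of_pos ht0]
        rw [habs]
        have h2 : |x| / t ≤ K := by
          rw [div_le_iff₀ ht0]
          linarith [hx]
        linarith
      · rw [Function.update_of_ne hi]
        exact le_trans (norm_le_pi_norm z i) hzR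
    have hgE : ∀ x : ℝ, |x| ≤ K * t →
        |E (Function.update (Dmap μ t z) 0 ((x : ℝ) : ℂ))| ≤ t := by
      intro x hx
      have h1 := hE1 (Function.update z 0 (((x / t : ℝ)) : ℂ)) (hyRnorm x hx)
      rw [← hupd x, hnormE', Real.rpow_one, one_mul] at h1
      exact h1
    set gfun : ℝ → ℝ := fun x => -2*x + t*(pf z').re
      + E (Function.update (Dmap μ t z) 0 ((x : ℝ) : ℂ)) with hgdef
    have hgcont : Continuous gfun := by
      apply Continuous.add
      · exact (continuous_const.mul continuous_id).add continuous_const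
      · apply hE.continuous.comp
        apply continuous_pi
        intro i
        rcases eq_or_ne i 0 with rfl | hi
        · simp only [Function.update_self]
          exact Complex.continuous_ofReal
        · simp only [Function.update_of_ne hi]
          exact continuous_const
    have hKt0 : 0 < K * t := mul_pos hK ht0
    have hpa : |(pf z').re| = K - 1 := by rw [hKdef]; ring
    have hgleft : 0 < gfun (-(K * t)) := by
      have hEb := hgE (-(K*t)) (by rw [abs_neg, abs_of_pos hKt0])
      have hEb1 := (abs_le.mp hEb).1
      have hPlow : -(K - 1) ≤ (pf z').re := by
        linarith [neg_abs_le (pf z').re, hpa]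
      rw [hgdef]
      dsimp only
      linarith [mul_le_mul_of_nonneg_left hPlow ht0.le, hEb1, hKt0]
    have hgright : gfun (K * t) < 0 := by
      have hEb := hgE (K*t) (by rw [abs_of_pos hKt0])
      have hEb2 := (abs_le.mp hEb).2
      have hPhigh : (pf z').re ≤ K - 1 := by
        linarith [le_abs_self (pf z').re, hpa]
      rw [hgdef]
      dsimp only
      linarith [mul_le_mul_of_nonneg_left hPhigh ht0.le, hEb2, hKt0]
    obtain ⟨x_t, hx_tmem, hgx⟩ := intermediate_value_Icc' (by linarith : -(K*t) ≤ K*t)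
      hgcont.continuousOn (show (0:ℝ) ∈ Set.Icc (gfun (K*t)) (gfun (-(K*t)))
        from ⟨hgright.le, hgleft.le⟩)
    have hx_t : |x_t| ≤ K * t := abs_le.mpr ⟨hx_tmem.1, hx_tmem.2⟩
    set y_t : Fin (n+1) → ℂ := Function.update z 0 (((x_t / t : ℝ)) : ℂ) with hy_tdef
    set w_t : Fin (n+1) → ℂ := Dmap μ t y_t with hw_tdef
    have hy_tR : ‖y_t‖ ≤ R := hyRnorm x_t hx_t
    have hw_talt : w_t = Function.update (Dmap μ t z) 0 ((x_t : ℝ) : ℂ) := by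
      rw [hw_tdef, hy_tdef, hupd]
    have hw_tU : w_t ∈ U := by
      apply hball
      rw [Metric.mem_ball, dist_zero_right]
      calc ‖w_t‖ ≤ t ^ ν * ‖y_t‖ := by
            rw [hw_tdef]; exact Dmap_norm_le μ hνle ht0 ht1.le y_t
      _ ≤ t ^ ν * R := mul_le_mul_of_nonneg_left hy_tR (Real.rpow_nonneg ht0.le _)
      _ < ρ := hρt
    have htail_w : (fun i : Fin n => w_t i.succ)
        = fun i => ((t ^ μ i.succ : ℝ) : ℂ) * z' i := by
      funext i
      rw [hw_talt, Function.update_of_ne (Fin.succ_ne_zero i), Dmap_apply,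
        Complex.real_smul, hz'def]
    have hrw_t : r w_t = 0 := by
      rw [hr w_t]
      have h0 : (w_t 0).re = x_t := by
        rw [hw_talt, Function.update_self, Complex.ofReal_re]
      have hpfval : (pf (fun i => w_t i.succ)).re = t * (pf z').re := by
        rw [htail_w, hphom t ht0]
        simp [Complex.mul_re]
      rw [h0, hpfval, Complex.ofReal_eq_zero]
      have hgw : -2 * x_t + t * (pf z').re + E w_t = gfun x_t := by
        rw [hgdef, hw_talt]
      linarith [hgx, hgw]
    -- derivative decompositions
    have hwr : ∀ (j : Fin (n+1)) x, wder j r x = wder j r₀ x + wder j E' x := by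
      intro j x
      conv_lhs => rw [hrsplit]
      exact wder_add hr₀sm hE's j x
    have hwr₀Q : ∀ (j : Fin (n+1)), j ≠ 0 → ∀ x, wder j r₀ x = wder j Q x := by
      intro j hj x
      conv_lhs => rw [hr₀split]
      rw [wder_add hℓsm hQsm, hwlj j hj, zero_add]
    have hwr₀0 : ∀ x, wder 0 r₀ x = -1 + wder 0 Q x := by
      intro x
      conv_lhs => rw [hr₀split]
      rw [wder_add hℓsm hQsm, hwl0]
    have he0 : ‖wder 0 E' w_t‖ ≤ 1/2 := by
      have h1 := hwE 0 y_t hy_tR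
      rw [← hw_tdef] at h1
      calc ‖wder 0 E' w_t‖ ≤ (1/2) * t ^ (1 - μ 0) := h1
      _ = 1/2 := by rw [hμ0, sub_self, Real.rpow_zero, mul_one]
    have hvalD : wder 0 r w_t = -1 + wder 0 E' w_t := by
      rw [hwr 0 w_t, hwr₀0 w_t, hwQ0 w_t]
      ring
    have hD0norm : 1/2 ≤ ‖wder 0 r w_t‖ := by
      rw [hvalD]
      have h1 := norm_sub_le ((-1 : ℂ) + wder 0 E' w_t) (wder 0 E' w_t)
      have h2 : (-1 : ℂ) + wder 0 E' w_t - wder 0 E' w_t = -1 := by ring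
      rw [h2] at h1
      have h3 : ‖(-1 : ℂ)‖ = 1 := by simp
      linarith
    have hD0ne : wder 0 r w_t ≠ 0 := by
      intro h
      rw [h, norm_zero] at hD0norm
      linarith
    -- the tangent vector b
    set bS : ℂ := ∑ i : Fin n, wder i.succ r w_t * ((t ^ μ i.succ : ℝ) • a i.succ) with hbSdef
    set b : Fin (n+1) → ℂ := fun j => if j = 0 then -(bS / wder 0 r w_t)
      else (t ^ μ j : ℝ) • a j with hbdef
    have hb0 : b 0 = -(bS / wder 0 r w_t) := by rw [hbdef]; dsimp only; exact if_pos rfl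
    have hbs : ∀ i : Fin n, b i.succ = (t ^ μ i.succ : ℝ) • a i.succ := by
      intro i
      rw [hbdef]
      dsimp only
      exact if_neg (Fin.succ_ne_zero i)
    have htan : (∑ j, wder j r w_t * b j) = 0 := by
      rw [Fin.sum_univ_succ]
      have hsum2 : (∑ i : Fin n, wder i.succ r w_t * b i.succ) = bS := by
        rw [hbSdef]
        apply Finset.sum_congr rfl
        intro i _
        rw [hbs i]
      rw [hb0, hsum2]
      field_simp
      ring
    -- invariance of pim on w_t
    have hpim_eq : pim w_t = pim (Dmap μ t z) := by
      funext i2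
      rw [hpim_apply, hpim_apply]
      rcases eq_or_ne i2 0 with rfl | hi2
      · simp
      · rw [if_neg hi2, if_neg hi2, hw_talt, Function.update_of_ne hi2]
    -- bound on bS
    have hbS : ‖bS‖ ≤ t * B₁ := by
      rw [hbSdef]
      calc ‖∑ i : Fin n, wder i.succ r w_t * ((t ^ μ i.succ : ℝ) • a i.succ)‖
          ≤ ∑ i : Fin n, ‖wder i.succ r w_t * ((t ^ μ i.succ : ℝ) • a i.succ)‖ :=
            norm_sum_le _ _
      _ ≤ ∑ i : Fin n, t * ((‖wder i.succ Q z‖ + 1) * ‖a i.succ‖) := by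
          apply Finset.sum_le_sum
          intro i _
          have hterm : ‖wder i.succ r w_t * ((t ^ μ i.succ : ℝ) • a i.succ)‖
              = ‖wder i.succ r w_t‖ * (t ^ μ i.succ * ‖a i.succ‖) := by
            rw [norm_mul, norm_smul, Real.norm_eq_abs,
              _root_.abs_of_nonneg (Real.rpow_nonneg ht0.le _)]
          rw [hterm]
          have hsplit : wder i.succ r w_t = wder i.succ Q w_t + wder i.succ E' w_t := by
            rw [hwr _ w_t, hwr₀Q _ (Fin.succ_ne_zero i) w_t]
          have hQpt : wder i.succ Q w_t = wder i.succ Q (Dmap μ t z) := by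
            rw [hwQpim _ (Fin.succ_ne_zero i) w_t, hpim_eq,
              ← hwQpim _ (Fin.succ_ne_zero i) (Dmap μ t z)]
          have hQscale : t ^ μ i.succ * ‖wder i.succ Q (Dmap μ t z)‖
              = t * ‖wder i.succ Q z‖ := by
            have h5 := congrArg norm (hQw_dil t ht0 i.succ z)
            rw [norm_smul, norm_smul, Real.norm_eq_abs, Real.norm_eq_abs,
              _root_.abs_of_nonneg (Real.rpow_nonneg ht0.le _), _root_.abs_of_pos ht0] at h5
            exact h5
          have hEpt : ‖wder i.succ E' w_t‖ ≤ (1/2) * t ^ (1 - μ i.succ) := by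
            have h6 := hwE i.succ y_t hy_tR
            rw [← hw_tdef] at h6
            exact h6
          have hmulE : t ^ μ i.succ * ((1/2) * t ^ (1 - μ i.succ)) = (1/2) * t := by
            rw [show t ^ μ i.succ * ((1/2) * t ^ (1 - μ i.succ))
              = (1/2) * (t ^ μ i.succ * t ^ (1 - μ i.succ)) from by ring,
              ← Real.rpow_add ht0]
            norm_num
          calc ‖wder i.succ r w_t‖ * (t ^ μ i.succ * ‖a i.succ‖)
              ≤ (‖wder i.succ Q w_t‖ + ‖wder i.succ E' w_t‖)
                * (t ^ μ i.succ * ‖a i.succ‖) := by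
                apply mul_le_mul_of_nonneg_right _
                  (mul_nonneg (Real.rpow_nonneg ht0.le _) (norm_nonneg _))
                rw [hsplit]
                exact norm_add_le _ _
          _ = (t ^ μ i.succ * ‖wder i.succ Q (Dmap μ t z)‖) * ‖a i.succ‖
              + (t ^ μ i.succ * ‖wder i.succ E' w_t‖) * ‖a i.succ‖ := by
                rw [hQpt]; ring
          _ ≤ t * ‖wder i.succ Q z‖ * ‖a i.succ‖ + ((1/2) * t) * ‖a i.succ‖ := by
                rw [hQscale]
                apply add_le_add_right
                apply mul_le_mul_of_nonneg_right _ (norm_nonneg _)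
                calc t ^ μ i.succ * ‖wder i.succ E' w_t‖
                    ≤ t ^ μ i.succ * ((1/2) * t ^ (1 - μ i.succ)) :=
                      mul_le_mul_of_nonneg_left hEpt (Real.rpow_nonneg ht0.le _)
                _ = (1/2) * t := hmulE
          _ ≤ t * ((‖wder i.succ Q z‖ + 1) * ‖a i.succ‖) := by
                nlinarith [norm_nonneg (a i.succ), ht0.le]
      _ = t * B₁ := by rw [hB₁def, Finset.mul_sum]
    have hb0norm : ‖b 0‖ ≤ 2 * B₁ * t := by
      rw [hb0, norm_neg, norm_div]
      rw [div_le_iff₀ (by linarith : (0:ℝ) < ‖wder 0 r w_t‖)]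
      calc ‖bS‖ ≤ t * B₁ := hbS
      _ = (2 * B₁ * t) * (1/2) := by ring
      _ ≤ (2 * B₁ * t) * ‖wder 0 r w_t‖ :=
          mul_le_mul_of_nonneg_left hD0norm
            (mul_nonneg (mul_nonneg (by norm_num) hB₁) ht0.le)
    have hbnorm : ∀ j, ‖b j‖ ≤ cvec j * t ^ μ j := by
      intro j
      rcases eq_or_ne j 0 with rfl | hj
      · rw [hcvecdef]
        dsimp only
        rw [if_pos rfl]
        calc ‖b 0‖ ≤ 2 * B₁ * t := hb0norm
        _ = 2 * B₁ * t ^ μ 0 := by rw [hμ0, Real.rpow_one]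
      · rw [hbdef, hcvecdef]
        dsimp only
        rw [if_neg hj, if_neg hj, norm_smul, Real.norm_eq_abs,
          _root_.abs_of_nonneg (Real.rpow_nonneg ht0.le _)]
        exact le_of_eq (mul_comm _ _)
    -- apply pseudoconvexity
    have hps0 := hps w_t hw_tU hrw_t b htan
    have hchessr : ∀ j k x, chess r j k x = chess Q j k x + chess E' j k x := by
      intro j k x
      conv_lhs => rw [hrsplit]
      rw [chess_add hr₀sm hE's, hchessr₀]
    have hsumsplit : (∑ j, ∑ k, chess r j k w_t * b j * starRingEnd ℂ (b k))
        = (∑ j, ∑ k, chess Q j k w_t * b j * starRingEnd ℂ (b k))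
          + (∑ j, ∑ k, chess E' j k w_t * b j * starRingEnd ℂ (b k)) := by
      rw [← Finset.sum_add_distrib]
      apply Finset.sum_congr rfl
      intro j _
      rw [← Finset.sum_add_distrib]
      apply Finset.sum_congr rfl
      intro k _
      rw [hchessr]
      ring
    have hT1 : (∑ j, ∑ k, chess Q j k w_t * b j * starRingEnd ℂ (b k))
        = (t:ℂ) * (∑ j, ∑ k, chess Q j k z * a j * starRingEnd ℂ (a k)) := by
      rw [Finset.mul_sum]
      apply Finset.sum_congr rfl
      intro j _
      rw [Finset.mul_sum]
      apply Finset.sum_congr rfl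
      intro k _
      by_cases hjk : j = 0 ∨ k = 0
      · rw [hchessQ0 j k hjk w_t, hchessQ0 j k hjk z]
        ring
      · push_neg at hjk
        obtain ⟨hj, hk⟩ := hjk
        have h1 : chess Q j k w_t = chess Q j k (Dmap μ t z) := by
          rw [hchessQpim j k hj hk w_t, hpim_eq, ← hchessQpim j k hj hk (Dmap μ t z)]
        have hbj : b j = (t ^ μ j : ℝ) • a j := by
          rw [hbdef]; dsimp only; exact if_neg hj
        have hbk : starRingEnd ℂ (b k) = (t ^ μ k : ℝ) • starRingEnd ℂ (a k) := by
          rw [hbdef]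
          dsimp only
          rw [if_neg hk, Complex.real_smul, Complex.real_smul, map_mul, Complex.conj_ofReal]
        rw [h1, hbj, hbk]
        have hdil := hQc_dil t ht0 j k z
        calc chess Q j k (Dmap μ t z) * ((t ^ μ j : ℝ) • a j)
            * ((t ^ μ k : ℝ) • starRingEnd ℂ (a k))
            = ((t ^ μ j : ℝ) • ((t ^ μ k : ℝ) • chess Q j k (Dmap μ t z)))
              * a j * starRingEnd ℂ (a k) := by
              simp only [Complex.real_smul]
              ring
        _ = ((t:ℝ) • chess Q j k z) * a j * starRingEnd ℂ (a k) := by rw [hdil]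
        _ = (t:ℂ) * (chess Q j k z * a j * starRingEnd ℂ (a k)) := by
              simp only [Complex.real_smul]
              ring
    have hT2 : ‖∑ j, ∑ k, chess E' j k w_t * b j * starRingEnd ℂ (b k)‖ ≤ ε₄ * M * t := by
      calc ‖∑ j, ∑ k, chess E' j k w_t * b j * starRingEnd ℂ (b k)‖
          ≤ ∑ j, ‖∑ k, chess E' j k w_t * b j * starRingEnd ℂ (b k)‖ := norm_sum_le _ _
      _ ≤ ∑ j, ∑ k, ‖chess E' j k w_t * b j * starRingEnd ℂ (b k)‖ :=
          Finset.sum_le_sum (fun j _ => norm_sum_le _ _)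
      _ ≤ ∑ j, ∑ k, ε₄ * (cvec j * cvec k) * t := by
          apply Finset.sum_le_sum
          intro j _
          apply Finset.sum_le_sum
          intro k _
          have hc1 : ‖chess E' j k w_t‖ ≤ ε₄ * t ^ (1 - μ j - μ k) := by
            have h7 := hcE (j, k) y_t hy_tR
            rw [← hw_tdef] at h7
            exact h7
          have hbj := hbnorm j
          have hbk2 : ‖starRingEnd ℂ (b k)‖ ≤ cvec k * t ^ μ k := by
            rw [RCLike.norm_conj]
            exact hbnorm k
          calc ‖chess E' j k w_t * b j * starRingEnd ℂ (b k)‖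
              = ‖chess E' j k w_t‖ * ‖b j‖ * ‖starRingEnd ℂ (b k)‖ := by
                rw [norm_mul, norm_mul]
          _ ≤ (ε₄ * t ^ (1 - μ j - μ k)) * (cvec j * t ^ μ j) * (cvec k * t ^ μ k) := by
                have hn1 : (0:ℝ) ≤ ε₄ * t ^ (1 - μ j - μ k) :=
                  mul_nonneg hε₄.le (Real.rpow_nonneg ht0.le _)
                have hn2 : (0:ℝ) ≤ cvec j * t ^ μ j :=
                  mul_nonneg (hcvec j) (Real.rpow_nonneg ht0.le _)
                exact mul_le_mul (mul_le_mul hc1 hbj (norm_nonneg _) hn1) hbk2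
                  (norm_nonneg _) (mul_nonneg hn1 hn2)
          _ = ε₄ * (cvec j * cvec k) * (t ^ (1 - μ j - μ k) * t ^ μ j * t ^ μ k) := by
                ring
          _ = ε₄ * (cvec j * cvec k) * t := by
                have hexp : t ^ (1 - μ j - μ k) * t ^ μ j * t ^ μ k = t := by
                  rw [← Real.rpow_add ht0, ← Real.rpow_add ht0,
                    show 1 - μ j - μ k + μ j + μ k = 1 by ring, Real.rpow_one]
                rw [hexp]
      _ = ε₄ * (∑ j, ∑ k, cvec j * cvec k) * t := by
          rw [Finset.mul_sum, Finset.sum_mul]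
          refine Finset.sum_congr rfl (fun j _ => ?_)
          rw [Finset.mul_sum, Finset.sum_mul]
      _ = ε₄ * M * t := by
          rw [hMdef, sq, Finset.sum_mul_sum]
    rw [hsumsplit, hT1] at hps0
    have hre : ((t:ℂ) * (∑ j, ∑ k, chess Q j k z * a j * starRingEnd ℂ (a k))
        + (∑ j, ∑ k, chess E' j k w_t * b j * starRingEnd ℂ (b k))).re
        = t * (∑ j, ∑ k, chess Q j k z * a j * starRingEnd ℂ (a k)).re
          + (∑ j, ∑ k, chess E' j k w_t * b j * starRingEnd ℂ (b k)).re := by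
      simp [Complex.add_re, Complex.mul_re]
    rw [hre] at hps0
    have hT2re : (∑ j, ∑ k, chess E' j k w_t * b j * starRingEnd ℂ (b k)).re ≤ ε₄ * M * t := by
      have h1 : |(∑ j, ∑ k, chess E' j k w_t * b j * starRingEnd ℂ (b k)).re|
          ≤ ‖∑ j, ∑ k, chess E' j k w_t * b j * starRingEnd ℂ (b k)‖ :=
        Complex.abs_re_le_norm _
      linarith [le_abs_self (∑ j, ∑ k, chess E' j k w_t * b j * starRingEnd ℂ (b k)).re, hT2]
    have hfin : -(ε₄ * M) ≤ (∑ j, ∑ k, chess Q j k z * a j * starRingEnd ℂ (a k)).re := by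
      nlinarith [hps0, hT2re, ht0]
    have hlast : ε₄ * M ≤ ε := by
      rw [hε₄def, div_mul_eq_mul_div, div_le_iff₀ (by linarith : (0:ℝ) < M + 1)]
      nlinarith [hM, hε.le]
    linarith
  by_contra hcon
  push_neg at hcon
  have := main (-(∑ j, ∑ k, chess Q j k z * a j * starRingEnd ℂ (a k)).re / 2)
    (by linarith)
  linarith
end

section
/- Let p_2(z, z̄) be a real homogeneous polynomial of degree 2k (k ≥ 1) on ℂ with no harmonic terms (no monomials z^a or z̄^b alone), written p_2 = ∑_{j=-k+1}^{k-1} C_j z^{k+j} z̄^{k-j}, and suppose ∂_z ∂_z̄ p_2 ≥ 0 everywhere and p_2 ≢ 0. Then C_0 > 0 and for every j ≠ 0, |C_j| ≤ (k²/(k²-j²)) C_0 < k·C_0. -/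
/-!
On the unit circle `z̄ = z⁻¹`, so `z^(k+j-1) z̄^(k-j-1) = (z²)^j` and `∂_z ∂_z̄ p₂` restricted
to the circle is the Laurent polynomial `P(w) = ∑ F_j w^j` in `w = z²`, with
`F_j = (k² - j²) C_j`. The symmetry `C_{-j} = conj C_j` makes `P` real there, hence nonnegative.
Sampling `P` at the `N`-th roots of unity `ω^m`, with `N` larger than the spread of the exponents,
recovers the coefficients by discrete Fourier inversion, `N F_j = ∑_m P(ω^m) ω^(-jm)`, so
`‖F_j‖ ≤ (1/N) ∑_m P(ω^m) = F_0`. If `Re C_0 ≤ 0` this forces every `C_j` to vanish, i.e. `p₂ ≡ 0`.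
-/

open Complex Finset
open scoped ComplexConjugate ComplexOrder

noncomputable def laurentEval (s : Finset ℤ) (a : ℤ → ℂ) (w : ℂ) : ℂ := ∑ j ∈ s, a j * w ^ j

namespace IsPrimitiveRoot

variable {ω : ℂ} {N : ℕ}

theorem sum_pow_zpow_eq_zero (hω : IsPrimitiveRoot ω N) {t : ℤ} (ht : t ≠ 0)
    (htN : t.natAbs < N) : ∑ m ∈ range N, (ω ^ m) ^ t = 0 := by
  have hne : ω ^ t ≠ 1 := fun h => by
    rw [hω.zpow_eq_one_iff_dvd, Int.natCast_dvd] at h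
    exact (Nat.le_of_dvd (Int.natAbs_pos.mpr ht) h).not_gt htN
  have hpow : (ω ^ t) ^ N = 1 := by
    rw [← zpow_natCast, ← zpow_mul, mul_comm, zpow_mul, zpow_natCast, hω.pow_eq_one, one_zpow]
  simp_rw [← zpow_natCast ω, ← zpow_mul, mul_comm _ t, zpow_mul, zpow_natCast]
  rw [geom_sum_eq hne, hpow, sub_self, zero_div]

variable {s : Finset ℤ}

theorem sum_laurentEval_mul_zpow (hω : IsPrimitiveRoot ω N)
    (hs : ∀ i ∈ s, ∀ j ∈ s, (i - j).natAbs < N) (a : ℤ → ℂ) {j₀ : ℤ} (hj₀ : j₀ ∈ s) :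
    ∑ m ∈ range N, laurentEval s a (ω ^ m) * (ω ^ m) ^ (-j₀) = N * a j₀ := by
  have hω0 : ω ≠ 0 := hω.ne_zero (by have := hs j₀ hj₀ j₀ hj₀; omega)
  simp_rw [laurentEval, sum_mul, mul_assoc, ← zpow_add₀ (pow_ne_zero _ hω0)]
  rw [sum_comm, sum_eq_single_of_mem j₀ hj₀]
  · simp [mul_comm]
  · intro j hj hne
    rw [← mul_sum, ← sub_eq_add_neg,
      hω.sum_pow_zpow_eq_zero (sub_ne_zero.mpr hne) (hs j hj j₀ hj₀), mul_zero]

theorem norm_le_re_of_laurentEval_nonneg (hω : IsPrimitiveRoot ω N)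
    (hs : ∀ i ∈ s, ∀ j ∈ s, (i - j).natAbs < N) {a : ℤ → ℂ}
    (hnonneg : ∀ m : ℕ, 0 ≤ laurentEval s a (ω ^ m)) (h0 : 0 ∈ s) {j : ℤ} (hj : j ∈ s) :
    ‖a j‖ ≤ (a 0).re := by
  have hN : (0 : ℝ) < N := by have := hs 0 h0 0 h0; exact_mod_cast (by omega : 0 < N)
  have hnorm : ‖ω‖ = 1 := hω.norm'_eq_one (by exact_mod_cast hN.ne')
  have key : (N : ℝ) * ‖a j‖ ≤ N * (a 0).re := calc
    (N : ℝ) * ‖a j‖ = ‖∑ m ∈ range N, laurentEval s a (ω ^ m) * (ω ^ m) ^ (-j)‖ := by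
        rw [hω.sum_laurentEval_mul_zpow hs a hj, norm_mul, Complex.norm_natCast]
    _ ≤ ∑ m ∈ range N, ‖laurentEval s a (ω ^ m)‖ := by
        refine (norm_sum_le _ _).trans_eq (sum_congr rfl fun m _ => ?_)
        rw [norm_mul, norm_zpow, norm_pow, hnorm, one_pow, one_zpow, mul_one]
    _ = (∑ m ∈ range N, laurentEval s a (ω ^ m)).re := by
        rw [re_sum]
        exact sum_congr rfl fun m _ => (re_eq_norm.mpr (hnonneg m)).symm
    _ = N * (a 0).re := by
        simpa using congrArg re (hω.sum_laurentEval_mul_zpow hs a h0)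
  exact le_of_mul_le_mul_left key hN

end IsPrimitiveRoot

theorem conj_laurentEval {s : Finset ℤ} (hs : ∀ j ∈ s, -j ∈ s) {a : ℤ → ℂ}
    (ha : ∀ j, a (-j) = conj (a j)) {w : ℂ} (hw : ‖w‖ = 1) :
    conj (laurentEval s a w) = laurentEval s a w := by
  rw [laurentEval, map_sum]
  refine sum_nbij' (fun j => -j) (fun j => -j) (fun j hj => hs j hj) (fun j hj => hs j hj)
    (fun j _ => neg_neg j) (fun j _ => neg_neg j) fun j _ => ?_
  rw [map_mul, ← ha, map_zpow₀, ← inv_eq_conj hw, inv_zpow']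

theorem norm_le_re_of_laurentEval_nonneg {s : Finset ℤ} {a : ℤ → ℂ} (h0 : 0 ∈ s)
    (hnonneg : ∀ w : ℂ, ‖w‖ = 1 → 0 ≤ laurentEval s a w) {j : ℤ} (hj : j ∈ s) :
    ‖a j‖ ≤ (a 0).re := by
  set N := 2 * s.sup Int.natAbs + 1
  have hs : ∀ i ∈ s, ∀ j ∈ s, (i - j).natAbs < N := fun i hi j hj => by
    have := le_sup (f := Int.natAbs) hi
    have := le_sup (f := Int.natAbs) hj
    omega
  have hω := isPrimitiveRoot_exp N (by omega)
  refine hω.norm_le_re_of_laurentEval_nonneg hs (fun m => hnonneg _ ?_) h0 hj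
  rw [norm_pow, hω.norm'_eq_one (by omega), one_pow]

theorem exists_sq_eq_of_norm_eq_one {w : ℂ} (hw : ‖w‖ = 1) : ∃ z : ℂ, ‖z‖ = 1 ∧ z ^ 2 = w := by
  obtain ⟨z, hz⟩ := IsAlgClosed.exists_pow_nat_eq w two_pos
  refine ⟨z, ?_, hz⟩
  rwa [← pow_eq_one_iff_of_nonneg (norm_nonneg z) two_ne_zero, ← norm_pow, hz]

theorem pow_mul_conj_pow_of_norm_eq_one {z : ℂ} (hz : ‖z‖ = 1) (p q : ℕ) :
    z ^ p * conj z ^ q = z ^ ((p : ℤ) - q) := by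
  have hz0 : z ≠ 0 := norm_ne_zero_iff.mp (by rw [hz]; exact one_ne_zero)
  rw [← inv_eq_conj hz, inv_pow, ← zpow_natCast, ← zpow_natCast, ← zpow_neg, ← zpow_add₀ hz0,
    sub_eq_add_neg]

noncomputable def ddbarCoeff (k : ℕ) (C : ℤ → ℂ) (j : ℤ) : ℂ :=
  C j * ((((k : ℤ) + j) * ((k : ℤ) - j) : ℤ) : ℂ)

theorem ddbarCoeff_neg (k : ℕ) {C : ℤ → ℂ} (hreal : ∀ j : ℤ, C (-j) = conj (C j)) (j : ℤ) :
    ddbarCoeff k C (-j) = conj (ddbarCoeff k C j) := by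
  rw [ddbarCoeff, ddbarCoeff, map_mul, map_intCast, hreal]
  congr 2
  ring

theorem re_ddbarCoeff_zero (k : ℕ) (C : ℤ → ℂ) :
    (ddbarCoeff k C 0).re = (k : ℝ) ^ 2 * (C 0).re := by
  simp [ddbarCoeff, sq, mul_comm]

theorem norm_ddbarCoeff {k : ℕ} (C : ℤ → ℂ) {j : ℤ} (hj : |j| ≤ k) :
    ‖ddbarCoeff k C j‖ = ((k : ℝ) ^ 2 - (j : ℝ) ^ 2) * ‖C j‖ := by
  have hpos : 0 ≤ ((k : ℤ) + j) * ((k : ℤ) - j) := by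
    rw [abs_le] at hj; exact mul_nonneg (by omega) (by omega)
  rw [ddbarCoeff, norm_mul, norm_intCast, abs_of_nonneg (by exact_mod_cast hpos), mul_comm]
  push_cast
  ring

theorem sum_ddbar_eq_laurentEval (k : ℕ) (C : ℤ → ℂ) {z : ℂ} (hz : ‖z‖ = 1) :
    ∑ j ∈ Icc (-(k : ℤ) + 1) ((k : ℤ) - 1), C j * ((((k : ℤ) + j) * ((k : ℤ) - j) : ℤ) : ℂ) *
        z ^ ((k : ℤ) + j - 1).toNat * conj z ^ ((k : ℤ) - j - 1).toNat =
      laurentEval (Icc (-(k : ℤ) + 1) ((k : ℤ) - 1)) (ddbarCoeff k C) (z ^ 2) := by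
  refine sum_congr rfl fun j hj => ?_
  rw [mem_Icc] at hj
  rw [mul_assoc, pow_mul_conj_pow_of_norm_eq_one hz, ← zpow_natCast z 2, ← zpow_mul, ddbarCoeff]
  congr 2
  omega

theorem laurentEval_ddbarCoeff_nonneg {k : ℕ} {C : ℤ → ℂ}
    (hreal : ∀ j : ℤ, C (-j) = conj (C j))
    (hnonneg : ∀ z : ℂ, 0 ≤ (∑ j ∈ Icc (-(k : ℤ) + 1) ((k : ℤ) - 1),
      C j * ((((k : ℤ) + j) * ((k : ℤ) - j) : ℤ) : ℂ) *
        z ^ ((k : ℤ) + j - 1).toNat * conj z ^ ((k : ℤ) - j - 1).toNat).re)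
    {w : ℂ} (hw : ‖w‖ = 1) :
    0 ≤ laurentEval (Icc (-(k : ℤ) + 1) ((k : ℤ) - 1)) (ddbarCoeff k C) w := by
  obtain ⟨z, hz, rfl⟩ := exists_sq_eq_of_norm_eq_one hw
  have hsymm : ∀ j ∈ Icc (-(k : ℤ) + 1) ((k : ℤ) - 1), -j ∈ Icc (-(k : ℤ) + 1) ((k : ℤ) - 1) :=
    fun j hj => by rw [mem_Icc] at hj ⊢; omega
  have hconj := conj_laurentEval hsymm (ddbarCoeff_neg k hreal) hw
  rw [nonneg_iff, ← sum_ddbar_eq_laurentEval k C hz]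
  exact ⟨hnonneg z, by rw [sum_ddbar_eq_laurentEval k C hz, eq_comm, ← conj_eq_iff_im, hconj]⟩

theorem sq_le_sub_one_sq_of_mem_Icc {k : ℕ} {j : ℤ} (hj : j ∈ Icc (-(k : ℤ) + 1) ((k : ℤ) - 1)) :
    (j : ℝ) ^ 2 ≤ ((k : ℝ) - 1) ^ 2 := by
  rw [mem_Icc] at hj
  exact sq_le_sq' (by exact_mod_cast (by omega : -((k : ℤ) - 1) ≤ j))
    (by exact_mod_cast (by omega : j ≤ (k : ℤ) - 1))

theorem sq_div_sq_sub_sq_lt {k x : ℝ} (hk : 1 ≤ k) (hx : 1 ≤ x ^ 2) (hxk : x ^ 2 ≤ (k - 1) ^ 2) :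
    k ^ 2 / (k ^ 2 - x ^ 2) < k := by
  rw [div_lt_iff₀ (by nlinarith)]
  nlinarith

/-- Let `p₂ = ∑_{j=-k+1}^{k-1} C_j z^{k+j} z̄^{k-j}` be a real homogeneous
polynomial of degree `2k` (`k ≥ 1`) on `ℂ` with no harmonic terms, such that
`∂_z ∂_z̄ p₂ ≥ 0` everywhere and `p₂ ≢ 0`. Then `C_0 > 0` and for every `j ≠ 0`,
`|C_j| ≤ (k²/(k²-j²)) C_0 < k C_0`. -/
theorem stmt_7 (k : ℕ) (hk : 1 ≤ k) (C : ℤ → ℂ)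
    (hreal : ∀ j : ℤ, C (-j) = starRingEnd ℂ (C j))
    (hnonneg : ∀ z : ℂ, 0 ≤ (∑ j ∈ Finset.Icc (-(k : ℤ) + 1) ((k : ℤ) - 1),
      C j * ((((k : ℤ) + j) * ((k : ℤ) - j) : ℤ) : ℂ) *
        z ^ ((k : ℤ) + j - 1).toNat * (starRingEnd ℂ z) ^ ((k : ℤ) - j - 1).toNat).re)
    (hne : ∃ z : ℂ, (∑ j ∈ Finset.Icc (-(k : ℤ) + 1) ((k : ℤ) - 1),
      C j * z ^ ((k : ℤ) + j).toNat * (starRingEnd ℂ z) ^ ((k : ℤ) - j).toNat) ≠ 0) :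
    0 < (C 0).re ∧ ∀ j : ℤ, j ≠ 0 → |j| ≤ (k : ℤ) - 1 →
      ‖C j‖ ≤ ((k : ℝ) ^ 2 / ((k : ℝ) ^ 2 - (j : ℝ) ^ 2)) * (C 0).re ∧
      ((k : ℝ) ^ 2 / ((k : ℝ) ^ 2 - (j : ℝ) ^ 2)) * (C 0).re < (k : ℝ) * (C 0).re := by
  set s := Icc (-(k : ℤ) + 1) ((k : ℤ) - 1)
  have hbound (j : ℤ) (hj : j ∈ s) :
      ((k : ℝ) ^ 2 - (j : ℝ) ^ 2) * ‖C j‖ ≤ (k : ℝ) ^ 2 * (C 0).re := by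
    rw [← norm_ddbarCoeff C (by rw [mem_Icc] at hj; rw [abs_le]; omega), ← re_ddbarCoeff_zero]
    exact norm_le_re_of_laurentEval_nonneg (by simp; omega)
      (fun w hw => laurentEval_ddbarCoeff_nonneg hreal hnonneg hw) hj
  have hk1 : (1 : ℝ) ≤ k := by exact_mod_cast hk
  have hsub (j : ℤ) (hj : j ∈ s) : 0 < (k : ℝ) ^ 2 - (j : ℝ) ^ 2 := by
    nlinarith [sq_le_sub_one_sq_of_mem_Icc hj]
  have hC0 : 0 < (C 0).re := by
    by_contra! h
    obtain ⟨z, hz⟩ := hne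
    refine hz (sum_eq_zero fun j hj => ?_)
    have : ‖C j‖ ≤ 0 := by nlinarith [hbound j hj, norm_nonneg (C j), hsub j hj]
    rw [norm_le_zero_iff.mp this, zero_mul, zero_mul]
  refine ⟨hC0, fun j hj0 hjk => ?_⟩
  have hj : j ∈ s := by rw [mem_Icc]; rw [abs_le] at hjk; omega
  have hj1 : (1 : ℝ) ≤ (j : ℝ) ^ 2 := by
    exact_mod_cast (one_le_sq_iff_one_le_abs j).mpr (Int.one_le_abs hj0)
  constructor
  · rw [div_mul_eq_mul_div, le_div_iff₀ (hsub j hj)]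
    linarith [hbound j hj]
  · exact mul_lt_mul_of_pos_right
      (sq_div_sq_sub_sq_lt hk1 hj1 (sq_le_sub_one_sq_of_mem_Icc hj)) hC0
end

section
/- Let P(z_2, ..., z_m, z̄_2, ..., z̄_m) be a nonzero real polynomial such that P(z, z̄) ≥ 0 for all z ∈ ℂ^{m-1}. Then the expansion of P contains a nonzero balanced monomial, i.e., a monomial of the form C |z_2|^{2α_2} |z_3|^{2α_3} ⋯ |z_m|^{2α_m} with C > 0, which can moreover be chosen to maximize the multidegree in (z_2, z̄_2), ..., (z_m, z̄_m) among balanced monomials in the reverse lexicographic order. -/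
open Complex Finset

/-- Reverse lexicographic order on multidegrees: `α ≤ β` iff they are equal or, at the
largest index where they differ, `α` is smaller. -/
def RevLexLE {n : ℕ} (α β : Fin n → ℕ) : Prop :=
  α = β ∨ ∃ j : Fin n, α j < β j ∧ ∀ i : Fin n, j < i → α i = β i

/-!
Average `P` over the rotations `z ↦ (ω ^ k₁ z₁, …, ω ^ kₙ zₙ)`, where `ω` is a primitive `K`-th
root of unity and `K` exceeds every exponent: this kills every unbalanced monomial and leaves the
balanced part `Q(z) = ∑ c(α, α) ∏ |zⱼ| ^ (2 αⱼ)`, which is therefore nonnegative and not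
identically zero. On the real curve `zⱼ = s ^ K ^ j` the balanced monomial of multidegree `α`
becomes `s ^ (2 ∑ αⱼ K ^ j)`, and the base-`K` number `∑ αⱼ K ^ j` is strictly increasing for the
reverse lexicographic order on digits below `K`. So `Q` restricted to the curve is a polynomial in
`s`, nonnegative on `ℝ`, whose leading coefficient is the coefficient of the revlex-largest
balanced monomial, and that coefficient is positive.
-/

-- Under `ComplexOrder`, `0 ≤ z` means that `z` is real and nonnegative.
open scoped ComplexOrder ComplexConjugate

namespace Polynomial

theorem leadingCoeff_pos_of_eval_nonneg {q : ℝ[X]} (hq : q ≠ 0) (h : ∀ s, 0 ≤ q.eval s) :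
    0 < q.leadingCoeff := by
  refine (leadingCoeff_ne_zero.mpr hq).symm.lt_of_le ?_
  by_contra! hneg
  by_cases hdeg : 0 < q.degree
  · obtain ⟨s, hs⟩ := ((q.tendsto_atBot_of_leadingCoeff_nonpos hdeg hneg.le).eventually
      (Filter.eventually_lt_atBot 0)).exists
    exact (h s).not_gt hs
  · rw [eq_C_of_degree_le_zero (not_lt.mp hdeg), leadingCoeff_C] at hneg
    simpa [coeff_zero_eq_eval_zero] using hneg.trans_le (h 0)

theorem exists_map_ofReal_eq {p : ℂ[X]} (h : ∀ s : ℝ, conj (p.eval (s : ℂ)) = p.eval (s : ℂ)) :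
    ∃ q : ℝ[X], q.map ofRealHom = p := by
  have hconj : p.map (starRingEnd ℂ) = p := by
    refine eq_of_infinite_eval_eq _ _ ((Set.infinite_range_of_injective ofReal_injective).mono ?_)
    rintro _ ⟨s, rfl⟩
    have h' := eval_map_apply (p := p) (starRingEnd ℂ) (s : ℂ)
    rw [conj_ofReal] at h'
    exact h'.trans (h s)
  refine mem_lifts p |>.mp <| (lifts_iff_coeff_lifts p).mpr fun k => ?_
  obtain ⟨r, hr⟩ := conj_eq_iff_real.mp (by rw [← coeff_map, hconj] : conj (p.coeff k) = p.coeff k)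
  exact ⟨r, hr.symm⟩

theorem leadingCoeff_pos_of_eval_ofReal_nonneg {p : ℂ[X]} (hp : p ≠ 0)
    (h : ∀ s : ℝ, 0 ≤ p.eval (s : ℂ)) : 0 < p.leadingCoeff := by
  obtain ⟨q, rfl⟩ := exists_map_ofReal_eq fun s => conj_eq_iff_im.mpr (nonneg_iff.mp (h s)).2.symm
  have hq : q ≠ 0 := by rintro rfl; exact hp (Polynomial.map_zero _)
  rw [leadingCoeff_map_of_injective ofReal_injective]
  refine zero_lt_real.mpr <| leadingCoeff_pos_of_eval_nonneg hq fun s => zero_le_real.mp ?_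
  have hs := eval_map_apply (p := q) ofRealHom s
  simp only [ofRealHom_eq_coe] at hs
  exact hs ▸ h s

theorem coeff_sum_C_mul_X_pow {ι R : Type*} [Semiring R] (F : Finset ι) (e : ι → ℕ) (v : ι → R)
    (k : ℕ) : (∑ i ∈ F, C (v i) * X ^ e i).coeff k = ∑ i ∈ F, if k = e i then v i else 0 := by
  simp only [finsetSum_coeff, coeff_C_mul_X_pow]

end Polynomial

open Polynomial in
theorem exists_pos_coeff_of_sum_mul_pow_nonneg {ι : Type*} {F : Finset ι} {e : ι → ℕ} {v : ι → ℂ}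
    (he : Set.InjOn e F) (hv : ∃ i ∈ F, v i ≠ 0)
    (h : ∀ s : ℝ, 0 ≤ ∑ i ∈ F, v i * (s : ℂ) ^ e i) :
    ∃ i ∈ F, 0 < v i ∧ ∀ i' ∈ F, v i' ≠ 0 → e i' ≤ e i := by
  classical
  set p : ℂ[X] := ∑ i ∈ F, C (v i) * X ^ e i
  have hcoeff : ∀ i ∈ F, p.coeff (e i) = v i := fun i hi => by
    rw [coeff_sum_C_mul_X_pow, sum_eq_single_of_mem i hi fun i' hi' hne => if_neg fun h' =>
      hne (he hi' hi h'.symm), if_pos rfl]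
  obtain ⟨i₀, hi₀, hvi₀⟩ := hv
  have hp : p ≠ 0 := fun hp => hvi₀ (by rw [← hcoeff i₀ hi₀, hp, coeff_zero])
  have hlc : 0 < p.leadingCoeff :=
    leadingCoeff_pos_of_eval_ofReal_nonneg hp fun s => by simpa [p, eval_finsetSum] using h s
  obtain ⟨i, hi, hdeg⟩ : ∃ i ∈ F, p.natDegree = e i := by
    have hne : p.coeff p.natDegree ≠ 0 := hlc.ne'
    rw [coeff_sum_C_mul_X_pow] at hne
    obtain ⟨i, hi, hne⟩ := exists_ne_zero_of_sum_ne_zero hne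
    exact ⟨i, hi, by_contra fun h' => hne (if_neg h')⟩
  refine ⟨i, hi, hcoeff i hi ▸ hdeg ▸ hlc, fun i' hi' hvi' => hdeg ▸ le_natDegree_of_ne_zero ?_⟩
  rwa [hcoeff i' hi']

theorem IsPrimitiveRoot.sum_pow_mul_conj_pow {ω : ℂ} {K a b : ℕ} (hω : IsPrimitiveRoot ω K)
    (ha : a < K) (hb : b < K) :
    ∑ t : Fin K, (ω ^ a * conj ω ^ b) ^ (t : ℕ) = if a = b then (K : ℂ) else 0 := by
  have hK : K ≠ 0 := by omega
  have hω0 : ω ≠ 0 := hω.ne_zero hK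
  rw [Fin.sum_univ_eq_sum_range (fun t => (ω ^ a * conj ω ^ b) ^ t),
    ← inv_eq_conj (hω.norm'_eq_one hK)]
  split_ifs with hab
  · simp [hab, hω0]
  · have hu : ω ^ a * ω⁻¹ ^ b ≠ 1 := by
      rw [inv_pow, ← div_eq_mul_inv, ← zpow_natCast, ← zpow_natCast, ← zpow_sub₀ hω0,
        Ne, hω.zpow_eq_one_iff_dvd]
      intro hdvd
      exact hab (by have := Int.eq_zero_of_abs_lt_dvd hdvd (by rw [abs_lt]; omega); omega)
    have huK : (ω ^ a * ω⁻¹ ^ b) ^ K = 1 := by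
      rw [mul_pow, inv_pow, inv_pow, pow_right_comm, pow_right_comm ω b, hω.pow_eq_one, one_pow,
        one_pow, inv_one, mul_one]
    rw [geom_sum_eq hu, huK, sub_self, zero_div]

section Monomial

variable {n : ℕ}

def monomialConj (a b : Fin n → ℕ) (z : Fin n → ℂ) : ℂ :=
  ∏ j, z j ^ a j * conj (z j) ^ b j

theorem prod_pow_mul_prod_conj_pow (a b : Fin n → ℕ) (z : Fin n → ℂ) :
    (∏ j, z j ^ a j) * ∏ j, conj (z j) ^ b j = monomialConj a b z :=
  prod_mul_distrib.symm

theorem monomialConj_mul (a b : Fin n → ℕ) (ζ z : Fin n → ℂ) :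
    monomialConj a b (ζ * z) = monomialConj a b ζ * monomialConj a b z := by
  simp only [monomialConj, ← prod_mul_distrib, Pi.mul_apply, map_mul]
  exact prod_congr rfl fun j _ => by ring

theorem sum_monomialConj_rotate {K : ℕ} {ω : ℂ} (hω : IsPrimitiveRoot ω K) {a b : Fin n → ℕ}
    (ha : ∀ j, a j < K) (hb : ∀ j, b j < K) (z : Fin n → ℂ) :
    ∑ k : Fin n → Fin K, monomialConj a b ((fun j => ω ^ (k j : ℕ)) * z) =
      if a = b then (K : ℂ) ^ n * monomialConj a b z else 0 := by
  have hsum : ∑ k : Fin n → Fin K, monomialConj a b (fun j => ω ^ (k j : ℕ)) =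
      ∏ j, if a j = b j then (K : ℂ) else 0 := by
    calc ∑ k : Fin n → Fin K, monomialConj a b (fun j => ω ^ (k j : ℕ))
        = ∑ k : Fin n → Fin K, ∏ j, (ω ^ a j * conj ω ^ b j) ^ (k j : ℕ) := by
          simp only [monomialConj, map_pow, mul_pow, pow_right_comm _ (a _), pow_right_comm _ (b _)]
      _ = ∏ j, ∑ t : Fin K, (ω ^ a j * conj ω ^ b j) ^ (t : ℕ) :=
          (Fintype.prod_sum fun j (t : Fin K) => (ω ^ a j * conj ω ^ b j) ^ (t : ℕ)).symm
      _ = _ := prod_congr rfl fun j _ => hω.sum_pow_mul_conj_pow (ha j) (hb j)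
  simp only [monomialConj_mul, ← sum_mul, hsum]
  by_cases hab : a = b
  · simp [hab]
  · obtain ⟨j, hj⟩ := Function.ne_iff.mp hab
    rw [if_neg hab, prod_eq_zero (mem_univ j) (if_neg hj), zero_mul]

end Monomial

def ofDigitsFin {n : ℕ} (K : ℕ) (α : Fin n → ℕ) : ℕ :=
  ∑ i, α i * K ^ (i : ℕ)

section RevLex

variable {n K : ℕ} {α β : Fin n → ℕ}

theorem sum_Iio_mul_pow_lt (hα : ∀ i, α i < K) (j : Fin n) :
    ∑ i ∈ Iio j, α i * K ^ (i : ℕ) < K ^ (j : ℕ) := by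
  have hgeom := geom_sum_mul_add (K - 1) j
  rw [Nat.sub_add_cancel (Nat.one_le_of_lt (hα j))] at hgeom
  calc ∑ i ∈ Iio j, α i * K ^ (i : ℕ)
      ≤ ∑ i ∈ Iio j, (K - 1) * K ^ (i : ℕ) :=
        sum_le_sum fun i _ => Nat.mul_le_mul_right _ (Nat.le_sub_one_of_lt (hα i))
    _ = (K - 1) * ∑ t ∈ range j, K ^ t := by
        rw [← mul_sum, ← Nat.Iio_eq_range, ← Fin.map_valEmbedding_Iio, sum_map]
        rfl
    _ < K ^ (j : ℕ) := by rw [mul_comm]; omega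

theorem ofDigitsFin_lt_ofDigitsFin (hα : ∀ i, α i < K) {j : Fin n} (hj : α j < β j)
    (htail : ∀ i, j < i → α i = β i) : ofDigitsFin K α < ofDigitsFin K β := by
  have hsplit : ∀ γ : Fin n → ℕ, ofDigitsFin K γ =
      ∑ i ∈ Iio j, γ i * K ^ (i : ℕ) + γ j * K ^ (j : ℕ) + ∑ i ∈ Ioi j, γ i * K ^ (i : ℕ) := by
    intro γ
    rw [ofDigitsFin, ← sum_filter_add_sum_filter_not univ (· < j)]
    simp only [not_lt, filter_gt_eq_Iio, filter_le_eq_Ici, ← Ioi_insert, sum_insert notMem_Ioi_self,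
      add_assoc]
  have htail' : ∑ i ∈ Ioi j, α i * K ^ (i : ℕ) = ∑ i ∈ Ioi j, β i * K ^ (i : ℕ) :=
    sum_congr rfl fun i hi => by rw [htail i (mem_Ioi.mp hi)]
  rw [hsplit α, hsplit β, htail', add_lt_add_iff_right]
  calc ∑ i ∈ Iio j, α i * K ^ (i : ℕ) + α j * K ^ (j : ℕ)
      < (α j + 1) * K ^ (j : ℕ) := by
        rw [add_mul, one_mul, add_comm]
        exact Nat.add_lt_add_left (sum_Iio_mul_pow_lt hα j) _
    _ ≤ β j * K ^ (j : ℕ) := Nat.mul_le_mul_right _ hj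
    _ ≤ _ := Nat.le_add_left _ _

theorem exists_greatest_ne (h : α ≠ β) : ∃ j, α j ≠ β j ∧ ∀ i, j < i → α i = β i := by
  classical
  obtain ⟨j, hj, hmax⟩ := exists_max_image (univ.filter fun i => α i ≠ β i) id
    (filter_nonempty_iff.mpr (by simpa [funext_iff] using h))
  exact ⟨j, (mem_filter.mp hj).2, fun i hi => by_contra fun hne =>
    (hmax i (mem_filter.mpr ⟨mem_univ i, hne⟩)).not_gt hi⟩

theorem revLexLE_of_ofDigitsFin_le (hα : ∀ i, α i < K) (h : ofDigitsFin K β ≤ ofDigitsFin K α) :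
    RevLexLE β α := by
  by_cases hβα : β = α
  · exact Or.inl hβα
  obtain ⟨j, hj, htail⟩ := exists_greatest_ne hβα
  refine Or.inr ⟨j, (Ne.lt_or_gt hj).resolve_right fun hlt => ?_, htail⟩
  exact h.not_gt (ofDigitsFin_lt_ofDigitsFin hα hlt fun i hi => (htail i hi).symm)

theorem ofDigitsFin_injOn : Set.InjOn (ofDigitsFin (n := n) K) {α | ∀ i, α i < K} := by
  intro α hα β hβ h
  rcases revLexLE_of_ofDigitsFin_le hβ h.le with hαβ | ⟨j, hj, htail⟩
  · exact hαβ
  · exact absurd h (ofDigitsFin_lt_ofDigitsFin hα hj htail).ne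

end RevLex

theorem monomialConj_ofReal_pow {n : ℕ} (K : ℕ) (α : Fin n → ℕ) (s : ℝ) :
    monomialConj α α (fun j => (s : ℂ) ^ K ^ (j : ℕ)) = (s : ℂ) ^ (2 * ofDigitsFin K α) := by
  simp only [monomialConj, map_pow, conj_ofReal, ← pow_add, ← pow_mul, ofDigitsFin, mul_sum,
    ← prod_pow_eq_pow_sum]
  exact prod_congr rfl fun j _ => by ring_nf

theorem Complex.nonneg_of_ofReal_mul_nonneg {r : ℝ} (hr : 0 < r) {z : ℂ} (h : 0 ≤ (r : ℂ) * z) :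
    0 ≤ z := by
  rw [nonneg_iff, re_ofReal_mul, im_ofReal_mul] at h
  exact nonneg_iff.mpr ⟨nonneg_of_mul_nonneg_right h.1 hr,
    ((mul_eq_zero.mp h.2.symm).resolve_left hr.ne').symm⟩

section Balanced

variable {n : ℕ} {S : Finset ((Fin n → ℕ) × (Fin n → ℕ))} {c : (Fin n → ℕ) × (Fin n → ℕ) → ℂ}

noncomputable def balancedSupport (S : Finset ((Fin n → ℕ) × (Fin n → ℕ))) : Finset (Fin n → ℕ) :=
  S.preimage (fun α => (α, α))
    (Function.Injective.injOn (f := fun α : Fin n → ℕ => (α, α)) fun _ _ h => congrArg Prod.fst h)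

theorem mem_balancedSupport {α : Fin n → ℕ} : α ∈ balancedSupport S ↔ (α, α) ∈ S := by
  rw [balancedSupport, mem_preimage]

theorem exists_exponent_bound (S : Finset ((Fin n → ℕ) × (Fin n → ℕ))) :
    ∃ K, 0 < K ∧ ∀ ab ∈ S, ∀ j, ab.1 j < K ∧ ab.2 j < K := by
  obtain ⟨M, hM⟩ := (S.biUnion fun ab => univ.image ab.1 ∪ univ.image ab.2).exists_le
  refine ⟨M + 1, M.succ_pos, fun ab hab j =>
    ⟨Nat.lt_succ_of_le (hM _ ?_), Nat.lt_succ_of_le (hM _ ?_)⟩⟩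
  all_goals simp only [mem_biUnion, mem_union, mem_image, mem_univ, true_and]
  exacts [⟨ab, hab, Or.inl ⟨j, rfl⟩⟩, ⟨ab, hab, Or.inr ⟨j, rfl⟩⟩]

theorem sum_rotate_eq_balanced {K : ℕ} {ω : ℂ} (hω : IsPrimitiveRoot ω K)
    (hS : ∀ ab ∈ S, ∀ j, ab.1 j < K ∧ ab.2 j < K) (z : Fin n → ℂ) :
    ∑ k : Fin n → Fin K, ∑ ab ∈ S, c ab * monomialConj ab.1 ab.2 ((fun j => ω ^ (k j : ℕ)) * z) =
      (K : ℂ) ^ n * ∑ α ∈ balancedSupport S, c (α, α) * monomialConj α α z := by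
  classical
  set g : (Fin n → ℕ) × (Fin n → ℕ) → ℂ := fun ab =>
    if ab.1 = ab.2 then (K : ℂ) ^ n * (c ab * monomialConj ab.1 ab.2 z) else 0
  calc ∑ k : Fin n → Fin K, ∑ ab ∈ S, c ab * monomialConj ab.1 ab.2 ((fun j => ω ^ (k j : ℕ)) * z)
      = ∑ ab ∈ S, g ab := by
        rw [sum_comm]
        refine sum_congr rfl fun ab hab => ?_
        rw [← mul_sum,
          sum_monomialConj_rotate hω (fun j => (hS ab hab j).1) fun j => (hS ab hab j).2]
        simp only [g, mul_ite, mul_zero, mul_left_comm]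
    _ = ∑ α ∈ balancedSupport S, g (α, α) := by
        unfold balancedSupport
        exact (sum_preimage _ _ _ g fun ab _ hab => if_neg fun h => hab ⟨ab.1, Prod.ext rfl h⟩).symm
    _ = _ := by simp only [g, if_true, mul_sum]

theorem balancedPart_nonneg (hP : ∀ z, 0 ≤ ∑ ab ∈ S, c ab * monomialConj ab.1 ab.2 z)
    (z : Fin n → ℂ) :
    0 ≤ ∑ α ∈ balancedSupport S, c (α, α) * monomialConj α α z := by
  obtain ⟨K, hK, hS⟩ := exists_exponent_bound S
  obtain ⟨ω, hω⟩ : ∃ ω : ℂ, IsPrimitiveRoot ω K := ⟨_, Complex.isPrimitiveRoot_exp K hK.ne'⟩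
  refine Complex.nonneg_of_ofReal_mul_nonneg (r := (K : ℝ) ^ n) (by positivity) ?_
  push_cast
  exact sum_rotate_eq_balanced hω hS z ▸ sum_nonneg fun k _ => hP _

theorem exists_balanced_coeff_ne_zero (hP : ∀ z, 0 ≤ ∑ ab ∈ S, c ab * monomialConj ab.1 ab.2 z)
    (hne : ∃ z, ∑ ab ∈ S, c ab * monomialConj ab.1 ab.2 z ≠ 0) :
    ∃ α ∈ balancedSupport S, c (α, α) ≠ 0 := by
  obtain ⟨z, hz⟩ := hne
  obtain ⟨K, hK, hS⟩ := exists_exponent_bound S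
  obtain ⟨ω, hω⟩ : ∃ ω : ℂ, IsPrimitiveRoot ω K := ⟨_, Complex.isPrimitiveRoot_exp K hK.ne'⟩
  have hrot0 : (fun j => ω ^ ((fun _ => (⟨0, hK⟩ : Fin K)) j : ℕ)) * z = z := by
    ext j; simp
  have hsum : ∑ α ∈ balancedSupport S, c (α, α) * monomialConj α α z ≠ 0 := by
    intro h0
    have hle := single_le_sum (fun k _ => hP ((fun j => ω ^ (k j : ℕ)) * z))
      (mem_univ fun _ => (⟨0, hK⟩ : Fin K))
    rw [sum_rotate_eq_balanced hω hS, h0, mul_zero, hrot0] at hle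
    exact hz (le_antisymm hle (hP z))
  obtain ⟨α, hα, hne⟩ := exists_ne_zero_of_sum_ne_zero hsum
  exact ⟨α, hα, left_ne_zero_of_mul hne⟩

end Balanced

/-- A nonzero real polynomial `P(z, z̄) ≥ 0` on `ℂ^{m-1}` contains a
nonzero balanced monomial `C |z_2|^{2α_2} ⋯ |z_m|^{2α_m}` with `C > 0`, which can be
chosen maximal in the reverse lexicographic order among the balanced monomials of `P`. -/
theorem stmt_11 (n : ℕ)
    (S : Finset ((Fin n → ℕ) × (Fin n → ℕ)))
    (c : (Fin n → ℕ) × (Fin n → ℕ) → ℂ)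
    (P : (Fin n → ℂ) → ℂ)
    (hP : ∀ z, P z = ∑ ab ∈ S, c ab *
      (∏ j, (z j) ^ (ab.1 j)) * (∏ j, (starRingEnd ℂ (z j)) ^ (ab.2 j)))
    (hreal : ∀ z, (P z).im = 0)
    (hnonneg : ∀ z, 0 ≤ (P z).re)
    (hne : ∃ z, P z ≠ 0) :
    ∃ α : Fin n → ℕ, (α, α) ∈ S ∧ (c (α, α)).im = 0 ∧ 0 < (c (α, α)).re ∧
      ∀ β : Fin n → ℕ, (β, β) ∈ S → c (β, β) ≠ 0 → RevLexLE β α := by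
  have hPsum : ∀ z, P z = ∑ ab ∈ S, c ab * monomialConj ab.1 ab.2 z := fun z => by
    simp only [hP, mul_assoc, prod_pow_mul_prod_conj_pow]
  have hP0 : ∀ z, 0 ≤ ∑ ab ∈ S, c ab * monomialConj ab.1 ab.2 z := fun z =>
    hPsum z ▸ nonneg_iff.mpr ⟨hnonneg z, (hreal z).symm⟩
  obtain ⟨K, -, hS⟩ := exists_exponent_bound S
  have hbound : ∀ {α}, α ∈ balancedSupport S → ∀ i, α i < K := fun hα i =>
    (hS _ (mem_balancedSupport.mp hα) i).1
  obtain ⟨α, hαS, hαpos, hαmax⟩ := exists_pos_coeff_of_sum_mul_pow_nonneg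
    (e := fun α => 2 * ofDigitsFin K α) (v := fun α => c (α, α))
    (fun α hα β hβ h => ofDigitsFin_injOn (hbound hα) (hbound hβ) (by simpa using h))
    (exists_balanced_coeff_ne_zero hP0 (by simpa only [hPsum] using hne))
    (fun s => by simpa only [monomialConj_ofReal_pow] using
      balancedPart_nonneg hP0 fun j => (s : ℂ) ^ K ^ (j : ℕ))
  refine ⟨α, mem_balancedSupport.mp hαS, (pos_iff.mp hαpos).2.symm, (pos_iff.mp hαpos).1,
    fun β hβ hcβ => revLexLE_of_ofDigitsFin_le (hbound hαS) ?_⟩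
  have := hαmax β (mem_balancedSupport.mpr hβ) hcβ
  omega
end

section
/- Let m ≥ 4 and n ≥ 2. The number of tuples (m_2, ..., m_n) that can arise as the multitype of a pseudoconvex hypersurface of finite 1-type m via the balanced-exponent equations ∑_{l=2}^{j} 2k_{jl}/m_l = 1 (with k_{jj} ≥ 1 and 0 ≤ k_{jl}, 2k_{jl} ≤ m for all l) is at most (⌊m/2⌋ + 1)^{(n-2)(n-1)/2} · ⌊m/2⌋^{n-1}. -/
/-!
Each `m_j` is determined by `m_2, …, m_{j-1}` and the coefficients `k_{j2}, …, k_{jj}` of the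
`j`-th equation, since `k_{jj} ≠ 0` lets one solve that equation for `2 k_{jj} / m_j`. Hence the
multitype is determined by the lower triangle of `k`, which takes at most `⌊m/2⌋ + 1` values
below the diagonal and `⌊m/2⌋` values on it.
-/

open Finset

theorem Set.encard_le_enatCard_of_exists_label {α β : Type*} {s : Set α} (r : β → α → Prop)
    (hex : ∀ a ∈ s, ∃ b, r b a) (hr : ∀ b, {a | r b a}.Subsingleton) :
    s.encard ≤ ENat.card β := by
  choose f hf using hex
  refine ENat.card_le_card_of_injective (f := fun a : s ↦ f a a.2) fun a a' h ↦ ?_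
  exact Subtype.ext <| hr (f a a.2) (hf a a.2) (by simp only at h; rw [h]; exact hf a' a'.2)

theorem eq_of_forall_sum_Iic_div_eq {K ι : Type*} [DivisionRing K] [LinearOrder ι]
    [LocallyFiniteOrderBot ι] [WellFoundedLT ι] {c : ι → ι → K} (hc : ∀ j, c j j ≠ 0)
    {M M' : ι → K} (h : ∀ j, ∑ l ∈ Iic j, c j l / M l = ∑ l ∈ Iic j, c j l / M' l) :
    M = M' := by
  funext j
  induction j using WellFoundedLT.induction with
  | _ j ih =>
    have hlt : ∑ l ∈ Iio j, c j l / M l = ∑ l ∈ Iio j, c j l / M' l :=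
      sum_congr rfl fun l hl ↦ by rw [ih l (mem_Iio.1 hl)]
    have hj := h j
    rwa [← Iio_insert, sum_insert notMem_Iio_self, sum_insert notMem_Iio_self, hlt,
      add_left_inj, div_eq_mul_inv, div_eq_mul_inv, mul_right_inj' (hc j), inv_inj] at hj

abbrev LowerTriangleCode (N a b : ℕ) : Type := (j : Fin N) → (Fin j → Fin a) × Fin b

/-- The diagonal is stored shifted by one: a positive `k j j ≤ b` fits in `Fin b`. -/
def EncodesLowerTriangle {N a b : ℕ} (t : LowerTriangleCode N a b) (k : Fin N → Fin N → ℕ) :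
    Prop :=
  ∀ j : Fin N, (∀ l : Fin j, ((t j).1 l : ℕ) = k j (Fin.castLT l (l.2.trans j.2))) ∧
    ((t j).2 : ℕ) + 1 = k j j

theorem exists_encodesLowerTriangle {N a b : ℕ} {k : Fin N → Fin N → ℕ}
    (hlt : ∀ j l, k j l < a) (hdiag : ∀ j : Fin N, 1 ≤ k j j ∧ k j j ≤ b) :
    ∃ t : LowerTriangleCode N a b, EncodesLowerTriangle t k :=
  ⟨fun j ↦ (fun l ↦ ⟨_, hlt _ _⟩, ⟨k j j - 1, by have := hdiag j; omega⟩),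
    fun j ↦ ⟨fun _ ↦ rfl, by have := hdiag j; simp only; omega⟩⟩

namespace EncodesLowerTriangle

variable {N a b : ℕ} {t : LowerTriangleCode N a b} {k k' : Fin N → Fin N → ℕ}

theorem one_le_diag (ht : EncodesLowerTriangle t k) (j : Fin N) : 1 ≤ k j j := by
  have := (ht j).2; omega

theorem eq_of_le (ht : EncodesLowerTriangle t k) (ht' : EncodesLowerTriangle t k')
    {j l : Fin N} (hlj : l ≤ j) : k j l = k' j l := by
  rcases hlj.lt_or_eq with hlj | rfl
  · exact ((ht j).1 ⟨l, hlj⟩).symm.trans ((ht' j).1 ⟨l, hlj⟩)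
  · rw [← (ht l).2, ← (ht' l).2]

end EncodesLowerTriangle

theorem card_lowerTriangleCode (N a b : ℕ) :
    Fintype.card (LowerTriangleCode N a b) = a ^ (N * (N - 1) / 2) * b ^ N := by
  simp only [Fintype.card_pi, Fintype.card_prod, Fintype.card_fin,
    prod_mul_distrib, prod_const, card_univ, prod_pow_eq_pow_sum]
  rw [Fin.sum_univ_eq_sum_range (fun i ↦ i) N, sum_range_id]

theorem stmt_16_general (m n : ℕ) :
    Set.encard { M : Fin (n - 1) → ℚ |
      (∀ l, 0 < M l) ∧
      ∃ k : Fin (n - 1) → Fin (n - 1) → ℕ,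
        (∀ j, 1 ≤ k j j) ∧ (∀ j l, 2 * k j l ≤ m) ∧
        (∀ j, ∑ l ∈ Finset.Iic j, ((2 * k j l : ℕ) : ℚ) / M l = 1) }
      ≤ (((m / 2 + 1) ^ ((n - 2) * (n - 1) / 2) * (m / 2) ^ (n - 1) : ℕ) : ℕ∞) := by
  refine (Set.encard_le_enatCard_of_exists_label
    (β := LowerTriangleCode (n - 1) (m / 2 + 1) (m / 2))
    (fun t M ↦ ∃ k, EncodesLowerTriangle t k ∧
      ∀ j, ∑ l ∈ Iic j, ((2 * k j l : ℕ) : ℚ) / M l = 1) ?_ ?_).trans_eq ?_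
  · rintro M ⟨-, k, hdiag, hbound, hsum⟩
    obtain ⟨t, ht⟩ := exists_encodesLowerTriangle (a := m / 2 + 1) (b := m / 2) (k := k)
      (fun j l ↦ by have := hbound j l; omega)
      (fun j ↦ ⟨hdiag j, by have := hbound j j; omega⟩)
    exact ⟨t, k, ht, hsum⟩
  · rintro t M ⟨k, hk, hM⟩ M' ⟨k', hk', hM'⟩
    refine eq_of_forall_sum_Iic_div_eq (c := fun j l ↦ ((2 * k j l : ℕ) : ℚ))
      (fun j ↦ by have := hk.one_le_diag j; positivity) fun j ↦ ?_
    rw [hM j, ← hM' j]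
    exact sum_congr rfl fun l hl ↦ by rw [hk.eq_of_le hk' (mem_Iic.1 hl)]
  · rw [ENat.card_eq_coe_fintype_card, card_lowerTriangleCode, Nat.sub_sub, Nat.mul_comm (n - 1)]

/-- For `m ≥ 4`, `n ≥ 2`, the number of tuples `(m_2, …, m_n)` of positive
rationals that can arise via the balanced-exponent equations `∑_{l=2}^{j} 2k_{jl}/m_l = 1`
(with integers `k_{jj} ≥ 1`, `k_{jl} ≥ 0`, `2k_{jl} ≤ m`) is at most
`(⌊m/2⌋ + 1)^{(n-2)(n-1)/2} ⌊m/2⌋^{n-1}`. -/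
theorem stmt_16 (m n : ℕ) (hm : 4 ≤ m) (hn : 2 ≤ n) :
    Set.encard { M : Fin (n - 1) → ℚ |
      (∀ l, 0 < M l) ∧
      ∃ k : Fin (n - 1) → Fin (n - 1) → ℕ,
        (∀ j, 1 ≤ k j j) ∧ (∀ j l, 2 * k j l ≤ m) ∧
        (∀ j, ∑ l ∈ Finset.Iic j, ((2 * k j l : ℕ) : ℚ) / M l = 1) }
      ≤ (((m / 2 + 1) ^ ((n - 2) * (n - 1) / 2) * (m / 2) ^ (n - 1) : ℕ) : ℕ∞) :=
  stmt_16_general m n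
end
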